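/- arXiv:1101.5336 — 10 statements merged into one kernel-verified Lean document; each statement's English description precedes it below -/
import Mathlib

section
/- If F is a (2,3)-spread of V(7,2) and P is a point of V(7,2), then the 21 members of F containing P induce a (1,2)-spread of the quotient space V/P; that is, the images of these members partition the nonzero vectors of the 6-dimensional quotient space into 2-dimensional subspaces. -/
set_option synthInstance.maxHeartbeats 1000000


abbrev V72 := Fin 7 → ZMod 2

/-- `F` is a (2,3)-spread of `V(7,2)`. -/
def IsSpread23 (F : Set (Submodule (ZMod 2) V72)) : Prop :=
  (∀ S ∈ F, Module.finrank (ZMod 2) S = 3) ∧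
  ∀ s : Submodule (ZMod 2) V72, Module.finrank (ZMod 2) s = 2 →
    ∃! S, S ∈ F ∧ s ≤ S

lemma finrank_map_mkQ_aux (P S : Submodule (ZMod 2) V72)
    (hP : Module.finrank (ZMod 2) P = 1) (hPS : P ≤ S)
    (hS : Module.finrank (ZMod 2) S = 3) :
    Module.finrank (ZMod 2) (S.map P.mkQ) = 2 := by
  set g : S →ₗ[ZMod 2] V72 ⧸ P := P.mkQ.comp S.subtype with hg
  have hrange : LinearMap.range g = S.map P.mkQ := by
    rw [hg, LinearMap.range_comp, Submodule.range_subtype]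
  have hker : LinearMap.ker g = P.comap S.subtype := by
    rw [hg, LinearMap.ker_comp, Submodule.ker_mkQ]
  have hkerrank : Module.finrank (ZMod 2) (LinearMap.ker g) = 1 := by
    rw [hker, (Submodule.comapSubtypeEquivOfLe hPS).finrank_eq, hP]
  have := LinearMap.finrank_range_add_finrank_ker g
  rw [hrange, hkerrank, hS] at this
  omega

/-- The members of F through P induce a (1,2)-spread of the quotient V/P:
their images are 2-dimensional and partition the nonzero vectors of V/P. -/
theorem spread23_derived_spread (F : Set (Submodule (ZMod 2) V72)) (hF : IsSpread23 F)
    (P : Submodule (ZMod 2) V72) (hP : Module.finrank (ZMod 2) P = 1) :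
    (∀ S ∈ F, P ≤ S → Module.finrank (ZMod 2) (S.map P.mkQ) = 2) ∧
    (∀ v : V72 ⧸ P, v ≠ 0 →
      ∃! T : Submodule (ZMod 2) (V72 ⧸ P),
        (∃ S ∈ F, P ≤ S ∧ T = S.map P.mkQ) ∧ v ∈ T) := by
  constructor
  · intro S hS hPS
    exact finrank_map_mkQ_aux P S hP hPS (hF.1 S hS)
  · intro v hv
    obtain ⟨x, rfl⟩ := P.mkQ_surjective v
    have hxP : x ∉ P := by
      intro hx
      exact hv ((Submodule.Quotient.mk_eq_zero P).mpr hx)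
    have hx0 : x ≠ 0 := fun h => hxP (h ▸ P.zero_mem)
    set s : Submodule (ZMod 2) V72 := P ⊔ Submodule.span (ZMod 2) {x} with hs
    have hinf : P ⊓ Submodule.span (ZMod 2) {x} = ⊥ := by
      rw [eq_bot_iff]
      rintro y ⟨hyP, hyx⟩
      obtain ⟨c, rfl⟩ := Submodule.mem_span_singleton.mp hyx
      have hc : c = 0 ∨ c = 1 := by
        have : ∀ d : ZMod 2, d = 0 ∨ d = 1 := by decide
        exact this c
      rcases hc with rfl | rfl
      · simp
      · rw [one_smul] at hyP
        exact absurd hyP hxP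
    have hsrank : Module.finrank (ZMod 2) s = 2 := by
      have := Submodule.finrank_sup_add_finrank_inf_eq P (Submodule.span (ZMod 2) {x})
      rw [hinf, hP, finrank_span_singleton hx0, finrank_bot] at this
      rw [← hs] at this
      omega
    obtain ⟨S, ⟨hSF, hsS⟩, hSuniq⟩ := hF.2 s hsrank
    have hPS : P ≤ S := le_trans le_sup_left hsS
    have hxS : x ∈ S := hsS (le_sup_right (α := Submodule (ZMod 2) V72)
      (Submodule.mem_span_singleton_self x))
    refine ⟨S.map P.mkQ, ⟨⟨S, hSF, hPS, rfl⟩, ⟨x, hxS, rfl⟩⟩, ?_⟩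
    rintro T ⟨⟨S', hS'F, hPS', rfl⟩, hvT⟩
    obtain ⟨y, hyS', hy⟩ := hvT
    have hxy : x - y ∈ P := by
      rw [← Submodule.Quotient.mk_eq_zero]
      have : P.mkQ (x - y) = P.mkQ x - P.mkQ y := by simp
      simp only [Submodule.mkQ_apply] at this hy ⊢
      rw [this, hy, sub_self]
    have hxS' : x ∈ S' := by
      have : x = (x - y) + y := by ring
      rw [this]
      exact S'.add_mem (hPS' hxy) hyS'
    have hsS' : s ≤ S' := sup_le hPS' ((Submodule.span_singleton_le_iff_mem x S').mpr hxS')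
    rw [hSuniq S' ⟨hS'F, hsS'⟩]
end

section
/- If F is a (2,3)-spread of V(7,2), then every 6-dimensional subspace U of V(7,2) contains exactly 45 members of F (i.e., exactly 45 members of F are subspaces of U). -/
/-!
Count ordered pairs of linearly independent vectors: a `d`-dimensional space over `𝔽_q` contains
`(q^d - 1)(q^d - q)` of them. Each such pair spans a 2-space lying in exactly one spread member `S`,
so the pairs inside any subspace `W` are partitioned according to `S ⊓ W`. For `W = V` this gives
`127 · 126 = 42 |F|`, i.e. `|F| = 381`. For the hyperplane `W = U`, a member either lies in `U`
(42 pairs) or meets it in a 2-space (6 pairs), so the number `a` of members inside `U` satisfies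
`63 · 62 = 42 a + 6 (381 - a)`, i.e. `a = 45`.
-/

open Module Submodule Finset

section LinIndepPairs

variable {K V : Type*} [DivisionRing K] [AddCommGroup V] [Module K V]

theorem finrank_inf_add_one_of_not_le [FiniteDimensional K V] {S U : Submodule K V}
    (hU : finrank K U + 1 = finrank K V) (hSU : ¬ S ≤ U) :
    finrank K ↥(S ⊓ U) + 1 = finrank K S := by
  have hlt : finrank K U < finrank K ↥(S ⊔ U) :=
    finrank_lt_finrank_of_lt (lt_of_le_of_ne le_sup_right fun h => hSU (h ▸ le_sup_left))
  have hle : finrank K ↥(S ⊔ U) ≤ finrank K V := Submodule.finrank_le _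
  have := Submodule.finrank_sup_add_finrank_inf_eq S U
  omega

theorem finrank_span_range_of_linearIndependent {a b : V} (h : LinearIndependent K ![a, b]) :
    finrank K (span K (Set.range ![a, b])) = 2 := by
  simpa using finrank_span_eq_card h

theorem span_range_pair_le_iff {W : Submodule K V} {a b : V} :
    span K (Set.range ![a, b]) ≤ W ↔ a ∈ W ∧ b ∈ W := by
  simp only [span_le, Set.range_subset_iff, Fin.forall_fin_two, Matrix.cons_val_zero,
    Matrix.cons_val_one, SetLike.mem_coe]

variable [Fintype V]

open scoped Classical in
noncomputable def linIndepPairs (W : Submodule K V) : Finset (V × V) :=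
  univ.filter fun p => p.1 ∈ W ∧ p.2 ∈ W ∧ LinearIndependent K ![p.1, p.2]

open scoped Classical in
theorem mem_linIndepPairs {W : Submodule K V} {p : V × V} :
    p ∈ linIndepPairs W ↔ p.1 ∈ W ∧ p.2 ∈ W ∧ LinearIndependent K ![p.1, p.2] := by
  simp [linIndepPairs]

open scoped Classical in
theorem card_filter_mem_submodule [Fintype K] (W : Submodule K V) :
    #(univ.filter (· ∈ W)) = Fintype.card K ^ finrank K W := by
  rw [← Module.card_eq_pow_finrank (K := K) (V := W), Fintype.card_subtype]

open scoped Classical in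
theorem filter_fst_linIndepPairs_eq {W : Submodule K V} {a : V} (ha0 : a ≠ 0) (haW : a ∈ W) :
    (linIndepPairs W).filter (·.1 = a) =
      {a} ×ˢ (univ.filter (· ∈ W) \ univ.filter (· ∈ K ∙ a)) := by
  ext ⟨x, b⟩
  simp only [mem_filter, mem_linIndepPairs, mem_univ, true_and, mem_product, mem_singleton,
    mem_sdiff, mem_span_singleton]
  constructor
  · rintro ⟨⟨-, hb, hli⟩, rfl⟩
    exact ⟨rfl, hb, fun ⟨c, hc⟩ => (LinearIndependent.pair_iff' ha0).1 hli c hc⟩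
  · rintro ⟨rfl, hb, hnot⟩
    exact ⟨⟨haW, hb, (LinearIndependent.pair_iff' ha0).2 fun c hc => hnot ⟨c, hc⟩⟩, rfl⟩

open scoped Classical in
theorem card_linIndepPairs [Fintype K] (W : Submodule K V) :
    #(linIndepPairs W) =
      (Fintype.card K ^ finrank K W - 1) * (Fintype.card K ^ finrank K W - Fintype.card K) := by
  have hfst : ∀ p ∈ linIndepPairs W, p.1 ∈ (univ.filter (· ∈ W)).erase 0 := by
    intro p hp
    rw [mem_linIndepPairs] at hp
    exact mem_erase.2 ⟨hp.2.2.ne_zero 0, by simpa using hp.1⟩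
  have hfiber : ∀ a ∈ (univ.filter (· ∈ W)).erase 0,
      #((linIndepPairs W).filter (·.1 = a)) = Fintype.card K ^ finrank K W - Fintype.card K := by
    intro a ha
    obtain ⟨ha0, haW⟩ := mem_erase.1 ha
    have haW : a ∈ W := by simpa using haW
    have hsub : univ.filter (· ∈ K ∙ a) ⊆ univ.filter (· ∈ W) := by
      intro x
      simpa using fun hx => (span_singleton_le_iff_mem a W).2 haW hx
    rw [filter_fst_linIndepPairs_eq ha0 haW, card_product, card_singleton, one_mul,
      card_sdiff_of_subset hsub, card_filter_mem_submodule, card_filter_mem_submodule,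
      finrank_span_singleton ha0, pow_one]
  rw [card_eq_sum_card_fiberwise hfst, sum_congr rfl hfiber, sum_const, smul_eq_mul,
    card_erase_of_mem (by simp), card_filter_mem_submodule]

theorem card_linIndepPairs_eq_sum_inf {F : Finset (Submodule K V)}
    (hF : ∀ s : Submodule K V, finrank K s = 2 → ∃! S, S ∈ F ∧ s ≤ S) (W : Submodule K V) :
    #(linIndepPairs W) = ∑ S ∈ F, #(linIndepPairs (S ⊓ W)) := by
  classical
  have hmem : ∀ {S p}, p ∈ linIndepPairs (S ⊓ W) ↔
      p ∈ linIndepPairs W ∧ span K (Set.range ![p.1, p.2]) ≤ S := by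
    intro S p
    simp only [mem_linIndepPairs, span_range_pair_le_iff, Submodule.mem_inf]
    tauto
  have hspan : ∀ p ∈ linIndepPairs W, finrank K (span K (Set.range ![p.1, p.2])) = 2 :=
    fun p hp => finrank_span_range_of_linearIndependent (mem_linIndepPairs.1 hp).2.2
  rw [← card_biUnion]
  · congr 1
    ext p
    rw [mem_biUnion]
    refine ⟨fun hp => ?_, fun ⟨S, _, hp⟩ => (hmem.1 hp).1⟩
    obtain ⟨S, ⟨hS, hle⟩, -⟩ := hF _ (hspan p hp)
    exact ⟨S, hS, hmem.2 ⟨hp, hle⟩⟩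
  · intro S hS S' hS' hne
    refine disjoint_left.2 fun p hp hp' => hne ?_
    obtain ⟨hpW, hle⟩ := hmem.1 hp
    exact (hF _ (hspan p hpW)).unique ⟨hS, hle⟩ ⟨hS', (hmem.1 hp').2⟩

end LinIndepPairs

theorem spread23_hyperplane_count (F : Set (Submodule (ZMod 2) V72)) (hF : IsSpread23 F)
    (U : Submodule (ZMod 2) V72) (hU : Module.finrank (ZMod 2) U = 6) :
    {S ∈ F | S ≤ U}.ncard = 45 := by
  classical
  obtain ⟨hrank, hunique⟩ := hF
  set FS := F.toFinite.toFinset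
  have hFS : ∀ S, S ∈ FS ↔ S ∈ F := fun S => F.toFinite.mem_toFinset
  have hpart : ∀ W, #(linIndepPairs W) = ∑ S ∈ FS, #(linIndepPairs (S ⊓ W)) :=
    card_linIndepPairs_eq_sum_inf (by simpa only [hFS] using hunique)
  have hV : finrank (ZMod 2) V72 = 7 := finrank_fin_fun _
  have hcard : ∀ (W : Submodule (ZMod 2) V72) d, finrank (ZMod 2) W = d →
      #(linIndepPairs W) = (2 ^ d - 1) * (2 ^ d - 2) := by
    rintro W d rfl
    rw [card_linIndepPairs, ZMod.card]
  have hmember : ∀ S ∈ FS, #(linIndepPairs (S ⊓ U)) = if S ≤ U then 42 else 6 := by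
    intro S hS
    have hS3 := hrank S ((hFS S).1 hS)
    split_ifs with hSU
    · rw [inf_eq_left.2 hSU]; exact hcard S 3 hS3
    · exact hcard _ 2 (by have := finrank_inf_add_one_of_not_le (by omega) hSU; omega)
  have htop := hpart ⊤
  simp only [inf_top_eq] at htop
  rw [hcard ⊤ 7 (by rw [finrank_top, hV]),
    sum_congr rfl fun S hS => hcard S 3 (hrank S ((hFS S).1 hS)), sum_const, smul_eq_mul] at htop
  have hhyp := hpart U
  rw [hcard U 6 hU, sum_congr rfl hmember, sum_ite, sum_const, sum_const, smul_eq_mul,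
    smul_eq_mul] at hhyp
  have hsplit := card_filter_add_card_filter_not (s := FS) (· ≤ U)
  have hncard : {S ∈ F | S ≤ U}.ncard = #(FS.filter (· ≤ U)) := by
    rw [← Set.ncard_coe_finset]; congr 1; ext; simp [hFS]
  omega
end

section
/- If F is a (2,3)-spread of V(7,2), U is a 6-dimensional subspace of V(7,2), and P is a point of U, then exactly 5 of the members of F that are contained in U contain P. -/
open Finset

lemma V72_filter_card (S : Submodule (ZMod 2) V72) [DecidablePred (· ∈ S)] :
    (univ.filter (· ∈ S)).card = 2 ^ Module.finrank (ZMod 2) S := by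
  classical
  rw [← Fintype.card_subtype]
  have : Fintype.card {x // x ∈ S} = Fintype.card (ZMod 2) ^ Module.finrank (ZMod 2) S :=
    Module.card_eq_pow_finrank (K := ZMod 2) (V := {x // x ∈ S})
  rw [this, ZMod.card]

lemma V72_card : (univ : Finset V72).card = 2 ^ 7 := by
  classical
  have := V72_filter_card (⊤ : Submodule (ZMod 2) V72)
  simp only [Submodule.mem_top, filter_true_of_mem (fun _ _ => trivial)] at this
  rw [this, finrank_top, Module.finrank_fin_fun]

theorem spread23_point_in_hyperplane_count (F : Set (Submodule (ZMod 2) V72))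
    (hF : IsSpread23 F) (U : Submodule (ZMod 2) V72)
    (hU : Module.finrank (ZMod 2) U = 6)
    (P : Submodule (ZMod 2) V72) (hP : Module.finrank (ZMod 2) P = 1) (hPU : P ≤ U) :
    {S ∈ F | S ≤ U ∧ P ≤ S}.ncard = 5 := by
  classical
  -- every vector outside P lies in a unique member of F containing P
  have key : ∀ v : V72, v ∉ P → ∃! S, (S ∈ F ∧ P ≤ S) ∧ v ∈ S := by
    intro v hv
    have hv0 : v ≠ 0 := fun h => hv (h ▸ P.zero_mem)
    have hinf : P ⊓ Submodule.span (ZMod 2) {v} = ⊥ := by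
      rw [eq_bot_iff]
      intro x hx
      obtain ⟨hxP, hxv⟩ := Submodule.mem_inf.mp hx
      obtain ⟨a, rfl⟩ := Submodule.mem_span_singleton.mp hxv
      have ha : a = 0 ∨ a = 1 := by
        have : ∀ b : ZMod 2, b = 0 ∨ b = 1 := by decide
        exact this a
      rcases ha with rfl | rfl
      · simp
      · simp only [one_smul] at hxP; exact absurd hxP hv
    have hrank : Module.finrank (ZMod 2) ↥(P ⊔ Submodule.span (ZMod 2) {v}) = 2 := by
      have h := Submodule.finrank_sup_add_finrank_inf_eq P (Submodule.span (ZMod 2) {v})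
      rw [hinf, hP, finrank_span_singleton hv0, finrank_bot] at h
      omega
    obtain ⟨S, ⟨hSF, hsS⟩, huniq⟩ := hF.2 _ hrank
    refine ⟨S, ⟨⟨hSF, le_trans le_sup_left hsS⟩, hsS (Submodule.mem_sup_right
      (Submodule.mem_span_singleton_self v))⟩, ?_⟩
    rintro S' ⟨⟨hS'F, hPS'⟩, hvS'⟩
    exact huniq S' ⟨hS'F, sup_le hPS' ((Submodule.span_singleton_le_iff_mem v S').2 hvS')⟩
  -- the finset of members of F containing P
  set A : Finset (Submodule (ZMod 2) V72) :=
    (Set.toFinite {S | S ∈ F ∧ P ≤ S}).toFinset with hA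
  have hmemA : ∀ S, S ∈ A ↔ S ∈ F ∧ P ≤ S := by
    intro S; simp [hA, Set.Finite.mem_toFinset]
  -- cardinality of pieces
  have hrank3 : ∀ S ∈ A, Module.finrank (ZMod 2) S = 3 := fun S hS =>
    hF.1 S ((hmemA S).1 hS).1
  have piececardP : ∀ S ∈ A, (univ.filter (fun v => v ∈ S ∧ v ∉ P)).card = 6 := by
    intro S hS
    obtain ⟨hSF, hPS⟩ := (hmemA S).1 hS
    have h1 := card_filter_add_card_filter_not (s := univ.filter (· ∈ S))
      (p := (· ∈ P))
    rw [filter_filter, filter_filter, V72_filter_card S, hrank3 S hS] at h1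
    have h2 : (univ.filter (fun v => v ∈ S ∧ v ∈ P)) = univ.filter (· ∈ P) := by
      apply filter_congr; intro v _
      simp only [eq_iff_iff, and_iff_right_iff_imp]
      exact fun h => hPS h
    rw [h2, V72_filter_card P, hP] at h1
    omega
  have piececardU : ∀ S ∈ A, ¬ S ≤ U →
      (univ.filter (fun v => v ∈ S ∧ v ∉ U)).card = 4 := by
    intro S hS hSU
    obtain ⟨hSF, hPS⟩ := (hmemA S).1 hS
    have hfr : Module.finrank (ZMod 2) ↥(S ⊓ U) = 2 := by
      have h := Submodule.finrank_sup_add_finrank_inf_eq S U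
      have hle : Module.finrank (ZMod 2) ↥(S ⊔ U) ≤ 7 := by
        have := Submodule.finrank_le (S ⊔ U)
        rwa [Module.finrank_fin_fun] at this
      have hle2 : Module.finrank (ZMod 2) ↥(S ⊓ U) ≤ 3 := by
        have := Submodule.finrank_mono (inf_le_left : S ⊓ U ≤ S)
        rwa [hrank3 S hS] at this
      have hne3 : Module.finrank (ZMod 2) ↥(S ⊓ U) ≠ 3 := by
        intro h3
        have : S ⊓ U = S := Submodule.eq_of_le_of_finrank_le inf_le_left
          (by rw [hrank3 S hS, h3])
        exact hSU (this ▸ (inf_le_right : S ⊓ U ≤ U))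
      rw [hrank3 S hS, hU] at h
      omega
    have h1 := card_filter_add_card_filter_not (s := univ.filter (· ∈ S))
      (p := (· ∈ U))
    rw [filter_filter, filter_filter, V72_filter_card S, hrank3 S hS] at h1
    have h2 : (univ.filter (fun v => v ∈ S ∧ v ∈ U)) = univ.filter (· ∈ S ⊓ U) := by
      apply filter_congr; intro v _; simp [Submodule.mem_inf]
    rw [h2, V72_filter_card (S ⊓ U), hfr] at h1
    omega
  -- partition of vectors outside P
  have hdisj : ∀ S ∈ A, ∀ S' ∈ A, S ≠ S' →
      Disjoint (univ.filter (fun v => v ∈ S ∧ v ∉ P))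
        (univ.filter (fun v => v ∈ S' ∧ v ∉ P)) := by
    intro S hS S' hS' hne
    rw [disjoint_left]
    intro v hv hv'
    simp only [mem_filter] at hv hv'
    obtain ⟨_, hvS, hvP⟩ := hv
    obtain ⟨_, hvS', _⟩ := hv'
    obtain ⟨W, _, huniq⟩ := key v hvP
    exact hne ((huniq S ⟨(hmemA S).1 hS, hvS⟩).trans (huniq S' ⟨(hmemA S').1 hS', hvS'⟩).symm)
  have hcover : univ.filter (fun v : V72 => v ∉ P) =
      A.biUnion (fun S => univ.filter (fun v => v ∈ S ∧ v ∉ P)) := by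
    ext v
    simp only [mem_filter, mem_univ, true_and, mem_biUnion]
    constructor
    · intro hv
      obtain ⟨S, ⟨hSmem, hvS⟩, _⟩ := key v hv
      exact ⟨S, (hmemA S).2 hSmem, hvS, hv⟩
    · rintro ⟨S, _, _, hv⟩; exact hv
  have hcardA : A.card = 21 := by
    have h1 := card_filter_add_card_filter_not (s := (univ : Finset V72))
      (p := (· ∈ P))
    rw [V72_filter_card P, hP, V72_card] at h1
    have h2 : (univ.filter (fun v : V72 => v ∉ P)).card = 6 * A.card := by
      rw [hcover, card_biUnion hdisj, Finset.sum_congr rfl piececardP, Finset.sum_const,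
        smul_eq_mul, mul_comm]
    omega
  -- partition of vectors outside U
  set B : Finset (Submodule (ZMod 2) V72) := A.filter (fun S => ¬ S ≤ U) with hB
  have hdisjU : ∀ S ∈ B, ∀ S' ∈ B, S ≠ S' →
      Disjoint (univ.filter (fun v => v ∈ S ∧ v ∉ U))
        (univ.filter (fun v => v ∈ S' ∧ v ∉ U)) := by
    intro S hS S' hS' hne
    rw [disjoint_left]
    intro v hv hv'
    simp only [mem_filter] at hv hv'
    obtain ⟨_, hvS, hvU⟩ := hv
    obtain ⟨_, hvS', _⟩ := hv'
    have hvP : v ∉ P := fun h => hvU (hPU h)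
    rw [hB, mem_filter] at hS hS'
    obtain ⟨W, _, huniq⟩ := key v hvP
    exact hne ((huniq S ⟨(hmemA S).1 hS.1, hvS⟩).trans
      (huniq S' ⟨(hmemA S').1 hS'.1, hvS'⟩).symm)
  have hcoverU : univ.filter (fun v : V72 => v ∉ U) =
      B.biUnion (fun S => univ.filter (fun v => v ∈ S ∧ v ∉ U)) := by
    ext v
    simp only [mem_filter, mem_univ, true_and, mem_biUnion]
    constructor
    · intro hv
      have hvP : v ∉ P := fun h => hv (hPU h)
      obtain ⟨S, ⟨hSmem, hvS⟩, _⟩ := key v hvP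
      have hSA : S ∈ A := (hmemA S).2 hSmem
      have hSnU : ¬ S ≤ U := fun h => hv (h hvS)
      exact ⟨S, by rw [hB, mem_filter]; exact ⟨hSA, hSnU⟩, hvS, hv⟩
    · rintro ⟨S, _, _, hv⟩; exact hv
  have hcardB : B.card = 16 := by
    have h1 := card_filter_add_card_filter_not (s := (univ : Finset V72))
      (p := (· ∈ U))
    rw [V72_filter_card U, hU, V72_card] at h1
    have h2 : (univ.filter (fun v : V72 => v ∉ U)).card = 4 * B.card := by
      have hpieces : ∀ S ∈ B, (univ.filter (fun v => v ∈ S ∧ v ∉ U)).card = 4 := by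
        intro S hS
        rw [hB, mem_filter] at hS
        exact piececardU S hS.1 hS.2
      rw [hcoverU, card_biUnion hdisjU, Finset.sum_congr rfl hpieces, Finset.sum_const,
        smul_eq_mul, mul_comm]
    omega
  -- conclude
  have hsplit := card_filter_add_card_filter_not (s := A) (p := fun S => S ≤ U)
  have hfin : {S ∈ F | S ≤ U ∧ P ≤ S} = ↑(A.filter (fun S => S ≤ U)) := by
    ext S
    simp only [Set.mem_setOf_eq, coe_filter, hmemA]
    tauto
  rw [hfin, Set.ncard_coe_finset]
  have : (A.filter (fun S => ¬ S ≤ U)).card = 16 := hcardB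
  omega
end

section
/- If F is a (2,3)-spread of V(7,2), then every 5-dimensional subspace T of V(7,2) contains exactly 5 members of F. -/
/-!
Fix a nonzero vector `v` of a subspace `W`. The vectors of `W` outside `K ∙ v` are partitioned by
the members of `F` through `v`, because `v` and such a `w` span a plane lying in exactly one member.
Taking `W = V` shows that every nonzero vector lies in 21 members, so `F` has 381 members. For
`n_S = 2 ^ dim (S ⊓ T) - 1`, counting the nonzero vectors and the ordered pairs of independent
vectors of `T` gives `∑ n_S = 31 · 21` and `∑ n_S (n_S - 1) = 31 · 30`. As `dim (S ⊓ T) ≥ 1`, we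
have `n_S ∈ {1, 3, 7}`, and `(n_S - 1) (n_S - 3)` is `24` if `S ≤ T` and `0` otherwise. Summing,
`24 · #{S ∈ F | S ≤ T} = 930 - 3 · 651 + 3 · 381 = 120`.
-/

open Module Submodule Finset

namespace Spread

open scoped Classical

variable {K V : Type*} [Field K] [AddCommGroup V] [Module K V] {F : Finset (Submodule K V)}

def CoversPlanesUniquely (F : Finset (Submodule K V)) : Prop :=
  ∀ U : Submodule K V, finrank K U = 2 → ∃! S, S ∈ F ∧ U ≤ S

variable [Fintype V]

lemma finrank_span_singleton_sup_span_singleton {v w : V} (hv : v ≠ 0) (hw : w ∉ K ∙ v) :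
    finrank K ↥((K ∙ v) ⊔ (K ∙ w)) = 2 := by
  rw [finrank_sup_span_singleton hw, finrank_span_singleton hv]

lemma existsUnique_mem_of_notMem_span_singleton (hcover : CoversPlanesUniquely F) {v w : V}
    (hv : v ≠ 0) (hw : w ∉ K ∙ v) : ∃! S, S ∈ F ∧ v ∈ S ∧ w ∈ S := by
  simpa only [sup_le_iff, span_singleton_le_iff_mem] using
    hcover _ (finrank_span_singleton_sup_span_singleton hv hw)

lemma card_filter_notMem_span_singleton_eq_sum (hcover : CoversPlanesUniquely F)
    {W : Submodule K V} {v : V} (hv : v ≠ 0) :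
    #{w | w ∈ W ∧ w ∉ K ∙ v} = ∑ S ∈ F with v ∈ S, #{w | w ∈ S ⊓ W ∧ w ∉ K ∙ v} := by
  rw [← card_biUnion]
  · congr 1
    ext w
    simp only [mem_filter, mem_univ, true_and, mem_biUnion, Submodule.mem_inf]
    constructor
    · rintro ⟨hwW, hw⟩
      obtain ⟨S, ⟨hS, hvS, hwS⟩, -⟩ := existsUnique_mem_of_notMem_span_singleton hcover hv hw
      exact ⟨S, ⟨hS, hvS⟩, ⟨hwS, hwW⟩, hw⟩
    · rintro ⟨S, -, ⟨-, hwW⟩, hw⟩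
      exact ⟨hwW, hw⟩
  · intro S₁ h₁ S₂ h₂ hne
    simp only [coe_filter, Set.mem_ofPred_eq] at h₁ h₂
    refine disjoint_left.2 fun w hw₁ hw₂ => hne ?_
    simp only [mem_filter, mem_univ, true_and, Submodule.mem_inf] at hw₁ hw₂
    exact (existsUnique_mem_of_notMem_span_singleton hcover hv hw₁.2).unique
      ⟨h₁.1, h₁.2, hw₁.1.1⟩ ⟨h₂.1, h₂.2, hw₂.1.1⟩

variable [Fintype K]

local notation "q" => Fintype.card K

lemma card_filter_mem (W : Submodule K V) : #{v | v ∈ W} = q ^ finrank K W := by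
  rw [← Fintype.card_subtype, ← card_eq_pow_finrank]

lemma card_filter_mem_ne_zero (W : Submodule K V) :
    #{v | v ∈ W ∧ v ≠ 0} = q ^ finrank K W - 1 := by
  have : ({v | v ∈ W ∧ v ≠ 0} : Finset V) = ({v | v ∈ W} : Finset V).erase 0 := by
    ext; simp [and_comm]
  rw [this, card_erase_of_mem (by simp), card_filter_mem]

lemma card_filter_mem_notMem_span_singleton {W : Submodule K V} {v : V} (hv : v ≠ 0)
    (hvW : v ∈ W) : #{w | w ∈ W ∧ w ∉ K ∙ v} = q ^ finrank K W - q := by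
  have hsdiff : ({w | w ∈ W ∧ w ∉ K ∙ v} : Finset V) =
      ({w | w ∈ W} : Finset V) \ ({w | w ∈ K ∙ v} : Finset V) := by
    ext; simp
  have hsub : ({w | w ∈ K ∙ v} : Finset V) ⊆ ({w | w ∈ W} : Finset V) :=
    monotone_filter_right _ fun _ _ => ((span_singleton_le_iff_mem v W).2 hvW ·)
  rw [hsdiff, card_sdiff_of_subset hsub, card_filter_mem, card_filter_mem,
    finrank_span_singleton hv, pow_one]

lemma pow_finrank_sub_eq_sum (hcover : CoversPlanesUniquely F) {W : Submodule K V} {v : V}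
    (hv : v ≠ 0) (hvW : v ∈ W) :
    q ^ finrank K W - q = ∑ S ∈ F with v ∈ S, (q ^ finrank K ↥(S ⊓ W) - q) := by
  rw [← card_filter_mem_notMem_span_singleton hv hvW,
    card_filter_notMem_span_singleton_eq_sum hcover hv]
  exact sum_congr rfl fun S hS =>
    card_filter_mem_notMem_span_singleton hv ⟨(mem_filter.1 hS).2, hvW⟩

lemma card_filter_mem_mul {t : ℕ} (hcover : CoversPlanesUniquely F)
    (hdim : ∀ S ∈ F, finrank K S = t) {v : V} (hv : v ≠ 0) :
    #{S ∈ F | v ∈ S} * (q ^ t - q) = q ^ finrank K V - q := by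
  rw [← finrank_top K V, pow_finrank_sub_eq_sum hcover hv mem_top, ← smul_eq_mul, ← sum_const]
  exact sum_congr rfl fun S hS => by rw [inf_top_eq, hdim S (mem_filter.1 hS).1]

lemma sum_filter_ne_zero_sum_filter_mem (W : Submodule K V) (f : Submodule K V → ℕ) :
    ∑ v ∈ {v | v ∈ W ∧ v ≠ 0}, ∑ S ∈ F with v ∈ S, f S =
      ∑ S ∈ F, (q ^ finrank K ↥(S ⊓ W) - 1) * f S := by
  rw [sum_comm' (t' := F) (s' := fun S => {v | v ∈ S ⊓ W ∧ v ≠ 0})]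
  · exact sum_congr rfl fun S _ => by rw [sum_const, card_filter_mem_ne_zero, smul_eq_mul]
  · intro v S
    simp only [mem_filter, mem_univ, true_and, Submodule.mem_inf]
    tauto

lemma sum_pow_finrank_inf_sub_one_mul {t : ℕ} (hcover : CoversPlanesUniquely F)
    (hdim : ∀ S ∈ F, finrank K S = t) (W : Submodule K V) :
    (∑ S ∈ F, (q ^ finrank K ↥(S ⊓ W) - 1)) * (q ^ t - q) =
      (q ^ finrank K W - 1) * (q ^ finrank K V - q) := by
  have h := sum_filter_ne_zero_sum_filter_mem (F := F) W fun _ => 1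
  simp only [mul_one, ← card_eq_sum_ones] at h
  rw [← h, sum_mul,
    sum_congr rfl fun v hv => card_filter_mem_mul hcover hdim (mem_filter.1 hv).2.2,
    sum_const, card_filter_mem_ne_zero, smul_eq_mul]

lemma sum_pow_finrank_inf_sub_one_mul_sub (hcover : CoversPlanesUniquely F) (W : Submodule K V) :
    ∑ S ∈ F, (q ^ finrank K ↥(S ⊓ W) - 1) * (q ^ finrank K ↥(S ⊓ W) - q) =
      (q ^ finrank K W - 1) * (q ^ finrank K W - q) := by
  rw [← sum_filter_ne_zero_sum_filter_mem, sum_congr rfl fun v hv =>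
    (pow_finrank_sub_eq_sum hcover (mem_filter.1 hv).2.2 (mem_filter.1 hv).2.1).symm,
    sum_const, card_filter_mem_ne_zero, smul_eq_mul]

lemma card_mul_mul {t : ℕ} (hcover : CoversPlanesUniquely F)
    (hdim : ∀ S ∈ F, finrank K S = t) :
    #F * (q ^ t - 1) * (q ^ t - q) = (q ^ finrank K V - 1) * (q ^ finrank K V - q) := by
  have h := sum_pow_finrank_inf_sub_one_mul hcover hdim ⊤
  rw [finrank_top] at h
  rw [← h, sum_congr rfl fun S hS => by rw [inf_top_eq, hdim S hS], sum_const, smul_eq_mul]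

end Spread

namespace Submodule

variable {K V : Type*} [DivisionRing K] [AddCommGroup V] [Module K V] [FiniteDimensional K V]

lemma finrank_add_finrank_le_finrank_add_finrank_inf (S T : Submodule K V) :
    finrank K S + finrank K T ≤ finrank K V + finrank K ↥(S ⊓ T) := by
  rw [← finrank_sup_add_finrank_inf_eq]
  gcongr
  exact finrank_le _

lemma finrank_inf_eq_left_iff {S T : Submodule K V} :
    finrank K ↥(S ⊓ T) = finrank K S ↔ S ≤ T :=
  ⟨fun h => inf_eq_left.1 (eq_of_le_of_finrank_eq inf_le_left h),
    fun h => by rw [inf_eq_left.2 h]⟩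

end Submodule

lemma Finset.sum_pow_two_sub_one_mul_add_three_mul_card {ι : Type*} (G : Finset ι) (d : ι → ℕ)
    (hd : ∀ i ∈ G, 1 ≤ d i ∧ d i ≤ 3) :
    ∑ i ∈ G, (2 ^ d i - 1) * (2 ^ d i - 2) + 3 * #G =
      3 * ∑ i ∈ G, (2 ^ d i - 1) + 24 * #{i ∈ G | d i = 3} := by
  rw [card_eq_sum_ones, card_filter, mul_sum, mul_sum, mul_sum, ← sum_add_distrib,
    ← sum_add_distrib]
  refine sum_congr rfl fun i hi => ?_
  obtain ⟨h₁, h₃⟩ := hd i hi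
  interval_cases d i <;> rfl

open Spread in
theorem spread23_dim5_count (F : Set (Submodule (ZMod 2) V72)) (hF : IsSpread23 F)
    (T : Submodule (ZMod 2) V72) (hT : Module.finrank (ZMod 2) T = 5) :
    {S ∈ F | S ≤ T}.ncard = 5 := by
  classical
  obtain ⟨G, rfl⟩ := (Set.toFinite F).exists_finset_coe
  obtain ⟨hdim, hcover⟩ := hF
  have hV : finrank (ZMod 2) V72 = 7 := by simp
  have hq : Fintype.card (ZMod 2) = 2 := ZMod.card 2
  have hcard := card_mul_mul hcover hdim
  have hsum₁ := sum_pow_finrank_inf_sub_one_mul hcover hdim T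
  have hsum₂ := sum_pow_finrank_inf_sub_one_mul_sub hcover T
  have hd : ∀ S ∈ G, 1 ≤ finrank (ZMod 2) ↥(S ⊓ T) ∧ finrank (ZMod 2) ↥(S ⊓ T) ≤ 3 := by
    intro S hS
    have hlow := finrank_add_finrank_le_finrank_add_finrank_inf S T
    have hup := Submodule.finrank_mono (inf_le_left : S ⊓ T ≤ S)
    rw [hdim S hS, hT, hV] at hlow
    rw [hdim S hS] at hup
    omega
  have key := G.sum_pow_two_sub_one_mul_add_three_mul_card _ hd
  simp only [hq, hV, hT] at hcard hsum₁ hsum₂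
  rw [show {S ∈ (G : Set _) | S ≤ T} = ↑{S ∈ G | S ≤ T} by simp, Set.ncard_coe_finset]
  rw [filter_congr fun S hS => by rw [← hdim S hS, finrank_inf_eq_left_iff]] at key
  omega
end

section
/- Let F be a (2,3)-spread of V(7,2) and let T be a 5-dimensional subspace of V(7,2). Then T contains at least 16 four-dimensional subspaces W such that no member of F is contained in W. -/
/-!
Every line of `V(7,2)` lies in exactly one member of `F`, so `F` has `2667 / 7 = 381` members,
and every point lies in exactly `63 / 3 = 21` of them. For a member `S`, the intersection
`S ⊓ T` has dimension `d ≤ 3`, and its numbers `p` of points and `l` of lines satisfy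
`p + 8 ≤ 2 l + 1` if `d = 3`, i.e. if `S ≤ T`, and `p ≤ 2 l + 1` otherwise. Summing over `F`
gives `31 * 21 + 8 a ≤ 2 * 155 + 381` for the number `a` of members inside `T`, so `a ≤ 5`.
Each of them lies in `3` of the `31` hyperplanes of `T`, hence at least `16` hyperplanes of `T`
contain no member of `F`.
-/

open Module Submodule Finset
open scoped Classical

lemma Finset.card_eq_card_mul_of_card_fiber_eq {α β : Type*} [DecidableEq β] {f : α → β}
    {s : Finset α} {t : Finset β} (hf : ∀ a ∈ s, f a ∈ t) {n : ℕ}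
    (hn : ∀ b ∈ t, #{a ∈ s | f a = b} = n) : #s = #t * n := by
  rw [card_eq_sum_card_fiberwise hf, sum_const_nat hn]

section FiniteField

variable {K V : Type*} [Field K] [AddCommGroup V] [Module K V] [Fintype V]

noncomputable def subspacesOfFinrank (U : Submodule K V) (k : ℕ) : Finset (Submodule K V) :=
  {W | W ≤ U ∧ finrank K W = k}

@[simp]
lemma mem_subspacesOfFinrank {U W : Submodule K V} {k : ℕ} :
    W ∈ subspacesOfFinrank U k ↔ W ≤ U ∧ finrank K W = k := by
  simp [subspacesOfFinrank]

lemma filter_subspacesOfFinrank_le (U S : Submodule K V) (k : ℕ) :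
    {W ∈ subspacesOfFinrank U k | W ≤ S} = subspacesOfFinrank (S ⊓ U) k := by
  ext W
  simp only [mem_filter, mem_subspacesOfFinrank, le_inf_iff]
  tauto

lemma sum_card_subspacesOfFinrank_inf (𝒮 : Finset (Submodule K V)) (U : Submodule K V)
    (k : ℕ) :
    ∑ S ∈ 𝒮, #(subspacesOfFinrank (S ⊓ U) k) =
      ∑ W ∈ subspacesOfFinrank U k, #{S ∈ 𝒮 | W ≤ S} := by
  simp_rw [← filter_subspacesOfFinrank_le]
  exact sum_card_bipartiteAbove_eq_sum_card_bipartiteBelow (fun S W => W ≤ S)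

lemma finrank_inf_eq_iff_le {S T : Submodule K V} :
    finrank K ↥(S ⊓ T) = finrank K S ↔ S ≤ T :=
  ⟨fun h => inf_eq_left.1 (eq_of_le_of_finrank_eq inf_le_left h),
    fun h => by rw [inf_eq_left.2 h]⟩

variable [Fintype K]

lemma card_toFinset_eq_pow_finrank (U : Submodule K V) :
    #(U : Set V).toFinset = Fintype.card K ^ finrank K U := by
  simpa using card_eq_pow_finrank (K := K) (V := U)

lemma card_toFinset_sdiff_toFinset {S T : Submodule K V} (h : S ≤ T) :
    #((T : Set V).toFinset \ (S : Set V).toFinset) =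
      Fintype.card K ^ finrank K T - Fintype.card K ^ finrank K S := by
  rw [card_sdiff_of_subset (Set.toFinset_subset_toFinset.2 h), card_toFinset_eq_pow_finrank,
    card_toFinset_eq_pow_finrank]

theorem card_covers_mul {S U : Submodule K V} (hSU : S ≤ U) :
    #{W ∈ subspacesOfFinrank U (finrank K S + 1) | S ≤ W} *
        (Fintype.card K ^ (finrank K S + 1) - Fintype.card K ^ finrank K S) =
      Fintype.card K ^ finrank K U - Fintype.card K ^ finrank K S := by
  rw [← card_toFinset_sdiff_toFinset hSU]
  refine (card_eq_card_mul_of_card_fiber_eq (f := fun x => S ⊔ span K {x}) ?_ ?_).symm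
  · intro x hx
    simp only [mem_sdiff, Set.mem_toFinset, SetLike.mem_coe] at hx
    simp only [mem_filter, mem_subspacesOfFinrank]
    exact ⟨⟨sup_le hSU ((span_singleton_le_iff_mem _ _).2 hx.1),
      finrank_sup_span_singleton hx.2⟩, le_sup_left⟩
  · intro W hW
    simp only [mem_filter, mem_subspacesOfFinrank] at hW
    obtain ⟨⟨hWU, hW⟩, hSW⟩ := hW
    have hfiber : {x ∈ (U : Set V).toFinset \ (S : Set V).toFinset | S ⊔ span K {x} = W} =
        (W : Set V).toFinset \ (S : Set V).toFinset := by
      ext x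
      simp only [mem_filter, mem_sdiff, Set.mem_toFinset, SetLike.mem_coe]
      constructor
      · rintro ⟨⟨-, hxS⟩, rfl⟩
        exact ⟨mem_sup_right (mem_span_singleton_self x), hxS⟩
      · rintro ⟨hxW, hxS⟩
        refine ⟨⟨hWU hxW, hxS⟩, eq_of_le_of_finrank_eq ?_ ?_⟩
        · exact sup_le hSW ((span_singleton_le_iff_mem _ _).2 hxW)
        · rw [finrank_sup_span_singleton hxS, hW]
    rw [hfiber, card_toFinset_sdiff_toFinset hSW, hW]

theorem card_subspacesOfFinrank_one_mul (U : Submodule K V) :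
    #(subspacesOfFinrank U 1) * (Fintype.card K - 1) = Fintype.card K ^ finrank K U - 1 := by
  simpa using card_covers_mul (bot_le : ⊥ ≤ U)

theorem card_lines_through_point_mul {P U : Submodule K V} (hPU : P ≤ U)
    (hP : finrank K P = 1) :
    #{L ∈ subspacesOfFinrank U 2 | P ≤ L} * (Fintype.card K ^ 2 - Fintype.card K) =
      Fintype.card K ^ finrank K U - Fintype.card K := by
  simpa [hP] using card_covers_mul hPU

end FiniteField

theorem ZMod.eq_zero_or_eq_one_of_two (a : ZMod 2) : a = 0 ∨ a = 1 := by
  fin_cases a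
  exacts [Or.inl rfl, Or.inr rfl]

theorem Module.Dual.eq_of_ker_eq_of_ne_zero_of_zmod_two {W : Type*} [AddCommGroup W]
    [Module (ZMod 2) W] [FiniteDimensional (ZMod 2) W] {φ ψ : Module.Dual (ZMod 2) W}
    (hφ : φ ≠ 0) (h : LinearMap.ker φ = LinearMap.ker ψ) : φ = ψ := by
  obtain ⟨x, hx⟩ : ∃ x, φ x ≠ 0 := by simpa [DFunLike.ne_iff] using hφ
  have hψx : ψ x ≠ 0 := fun hψ => hx (by rwa [← LinearMap.mem_ker, h, LinearMap.mem_ker])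
  refine Module.Dual.eq_of_ker_eq_of_apply_eq x h ?_ hx
  rw [(ZMod.eq_zero_or_eq_one_of_two _).resolve_left hx,
    (ZMod.eq_zero_or_eq_one_of_two _).resolve_left hψx]

section ZModTwo

variable {V : Type*} [AddCommGroup V] [Module (ZMod 2) V] [Fintype V]

theorem card_subspacesOfFinrank_one (U : Submodule (ZMod 2) V) :
    #(subspacesOfFinrank U 1) = 2 ^ finrank (ZMod 2) U - 1 := by
  simpa using card_subspacesOfFinrank_one_mul U

theorem card_subspacesOfFinrank_two_mul_six (U : Submodule (ZMod 2) V) :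
    #(subspacesOfFinrank U 2) * 6 =
      (2 ^ finrank (ZMod 2) U - 1) * (2 ^ finrank (ZMod 2) U - 2) := by
  have hincidences := sum_card_bipartiteAbove_eq_sum_card_bipartiteBelow (fun P L => P ≤ L)
    (s := subspacesOfFinrank U 1) (t := subspacesOfFinrank U 2)
  have hpoint : ∀ P ∈ subspacesOfFinrank U 1,
      #((subspacesOfFinrank U 2).bipartiteAbove (fun P L => P ≤ L) P) * 2 =
        2 ^ finrank (ZMod 2) U - 2 := by
    intro P hP
    rw [mem_subspacesOfFinrank] at hP
    simpa [bipartiteAbove] using card_lines_through_point_mul hP.1 hP.2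
  have hline : ∀ L ∈ subspacesOfFinrank U 2,
      #((subspacesOfFinrank U 1).bipartiteBelow (fun P L => P ≤ L) L) = 3 := by
    intro L hL
    rw [mem_subspacesOfFinrank] at hL
    rw [bipartiteBelow, filter_subspacesOfFinrank_le, inf_eq_left.2 hL.1,
      card_subspacesOfFinrank_one, hL.2]
    rfl
  calc #(subspacesOfFinrank U 2) * 6
      = (∑ L ∈ subspacesOfFinrank U 2,
          #((subspacesOfFinrank U 1).bipartiteBelow (fun P L => P ≤ L) L)) * 2 := by
        rw [sum_const_nat hline]; ring
    _ = ∑ P ∈ subspacesOfFinrank U 1, (2 ^ finrank (ZMod 2) U - 2) := by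
        rw [← hincidences, sum_mul]; exact sum_congr rfl hpoint
    _ = _ := by rw [sum_const, smul_eq_mul, card_subspacesOfFinrank_one]

theorem card_points_inf_add_le {S : Submodule (ZMod 2) V} (hS : finrank (ZMod 2) S = 3)
    (T : Submodule (ZMod 2) V) :
    #(subspacesOfFinrank (S ⊓ T) 1) + (if S ≤ T then 8 else 0) ≤
      2 * #(subspacesOfFinrank (S ⊓ T) 2) + 1 := by
  have hpoints := card_subspacesOfFinrank_one (S ⊓ T)
  have hlines := card_subspacesOfFinrank_two_mul_six (S ⊓ T)
  split_ifs with hST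
  · rw [inf_eq_left.2 hST] at hpoints hlines ⊢
    rw [hS] at hpoints hlines
    norm_num at hpoints hlines
    omega
  · have hlt : finrank (ZMod 2) ↥(S ⊓ T) < 3 :=
      lt_of_le_of_ne (hS ▸ finrank_mono inf_le_left) (hS ▸ mt finrank_inf_eq_iff_le.1 hST)
    interval_cases finrank (ZMod 2) ↥(S ⊓ T) <;>
      norm_num [-card_eq_zero] at hpoints hlines <;> omega

theorem two_pow_sub_one_le_card_hyperplanes (U : Submodule (ZMod 2) V) :
    2 ^ finrank (ZMod 2) U - 1 ≤ #(subspacesOfFinrank U (finrank (ZMod 2) U - 1)) := by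
  have : Finite (Module.Dual (ZMod 2) U) := Module.finite_of_finite (ZMod 2)
  let _ : Fintype (Module.Dual (ZMod 2) U) := Fintype.ofFinite _
  have hcard : #(univ.erase (0 : Module.Dual (ZMod 2) U)) = 2 ^ finrank (ZMod 2) U - 1 := by
    rw [card_erase_of_mem (mem_univ _), card_univ, card_eq_pow_finrank (K := ZMod 2),
      Subspace.dual_finrank_eq, ZMod.card]
  rw [← hcard]
  refine card_le_card_of_injOn (fun φ => (LinearMap.ker φ).map U.subtype) ?_ ?_
  · intro φ hφ
    rw [mem_coe, mem_erase] at hφ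
    rw [mem_coe, mem_subspacesOfFinrank, finrank_map_subtype_eq,
      ← Module.Dual.finrank_ker_add_one_of_ne_zero hφ.1]
    exact ⟨map_subtype_le _ _, rfl⟩
  · intro φ hφ ψ _ h
    exact Module.Dual.eq_of_ker_eq_of_ne_zero_of_zmod_two (mem_erase.1 hφ).1
      (map_injective_of_injective U.injective_subtype h)

end ZModTwo

lemma finrank_V72 : finrank (ZMod 2) V72 = 7 := finrank_fin_fun (ZMod 2)

namespace IsSpread23

variable {F : Set (Submodule (ZMod 2) V72)}

theorem card_filter_le_of_finrank_two (hF : IsSpread23 F) {L : Submodule (ZMod 2) V72}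
    (hL : finrank (ZMod 2) L = 2) : #{S ∈ F.toFinset | L ≤ S} = 1 := by
  obtain ⟨S, hS, huniq⟩ := hF.2 L hL
  rw [card_eq_one]
  refine ⟨S, ?_⟩
  ext S'
  simp only [mem_filter, Set.mem_toFinset, mem_singleton]
  exact ⟨huniq S', fun h => h ▸ hS⟩

theorem card_filter_le_of_finrank_one (hF : IsSpread23 F) {P : Submodule (ZMod 2) V72}
    (hP : finrank (ZMod 2) P = 1) : #{S ∈ F.toFinset | P ≤ S} = 21 := by
  have hincidences := card_mul_eq_card_mul (fun L S => L ≤ S)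
    (s := {L ∈ subspacesOfFinrank ⊤ 2 | P ≤ L}) (t := {S ∈ F.toFinset | P ≤ S})
    (m := 1) (n := 3) ?_ ?_
  · have hlines := card_lines_through_point_mul le_top hP
    norm_num [finrank_V72] at hlines
    omega
  · intro L hL
    simp only [mem_filter, mem_subspacesOfFinrank] at hL
    convert hF.card_filter_le_of_finrank_two hL.1.2 using 2
    ext S
    simp only [bipartiteAbove, mem_filter]
    exact ⟨fun h => ⟨h.1.1, h.2⟩, fun h => ⟨⟨h.1, hL.2.trans h.2⟩, h.2⟩⟩
  · intro S hS
    simp only [mem_filter, Set.mem_toFinset] at hS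
    have hlines := card_lines_through_point_mul hS.2 hP
    norm_num [hF.1 S hS.1] at hlines
    rw [bipartiteBelow, filter_comm, filter_subspacesOfFinrank_le, inf_top_eq]
    omega

theorem sum_card_subspacesOfFinrank_two_inf (hF : IsSpread23 F) (U : Submodule (ZMod 2) V72) :
    ∑ S ∈ F.toFinset, #(subspacesOfFinrank (S ⊓ U) 2) = #(subspacesOfFinrank U 2) := by
  rw [sum_card_subspacesOfFinrank_inf, sum_const_nat fun L hL =>
    hF.card_filter_le_of_finrank_two (mem_subspacesOfFinrank.1 hL).2, mul_one]

theorem sum_card_subspacesOfFinrank_one_inf (hF : IsSpread23 F) (U : Submodule (ZMod 2) V72) :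
    ∑ S ∈ F.toFinset, #(subspacesOfFinrank (S ⊓ U) 1) = #(subspacesOfFinrank U 1) * 21 := by
  rw [sum_card_subspacesOfFinrank_inf,
    sum_const_nat fun P hP => hF.card_filter_le_of_finrank_one (mem_subspacesOfFinrank.1 hP).2]

theorem card_toFinset (hF : IsSpread23 F) : #F.toFinset = 381 := by
  have hmember : ∀ S ∈ F.toFinset, #(subspacesOfFinrank (S ⊓ ⊤) 2) = 7 := by
    intro S hS
    have hlines := card_subspacesOfFinrank_two_mul_six S
    rw [hF.1 S (Set.mem_toFinset.1 hS)] at hlines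
    rw [inf_top_eq]
    omega
  have hlines := card_subspacesOfFinrank_two_mul_six (⊤ : Submodule (ZMod 2) V72)
  rw [finrank_top, finrank_V72, ← hF.sum_card_subspacesOfFinrank_two_inf ⊤,
    sum_const_nat hmember] at hlines
  omega

theorem card_filter_le_le_five (hF : IsSpread23 F) {T : Submodule (ZMod 2) V72}
    (hT : finrank (ZMod 2) T = 5) : #{S ∈ F.toFinset | S ≤ T} ≤ 5 := by
  have hsum := sum_le_sum fun S hS => card_points_inf_add_le (hF.1 S (Set.mem_toFinset.1 hS)) T
  rw [sum_add_distrib, sum_add_distrib, ← mul_sum, sum_const, smul_eq_mul, mul_one,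
    hF.sum_card_subspacesOfFinrank_one_inf, hF.sum_card_subspacesOfFinrank_two_inf,
    hF.card_toFinset, sum_ite, sum_const_zero, sum_const, smul_eq_mul] at hsum
  have hpoints := card_subspacesOfFinrank_one T
  have hlines := card_subspacesOfFinrank_two_mul_six T
  norm_num [hT] at hpoints hlines
  omega

theorem card_filter_exists_le_le_fifteen (hF : IsSpread23 F) {T : Submodule (ZMod 2) V72}
    (hT : finrank (ZMod 2) T = 5) :
    #{W ∈ subspacesOfFinrank T 4 | ∃ S ∈ F, S ≤ W} ≤ 15 := by
  have hcovers : ∀ S ∈ {S ∈ F.toFinset | S ≤ T},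
      #{W ∈ subspacesOfFinrank T 4 | S ≤ W} = 3 := by
    intro S hS
    simp only [mem_filter, Set.mem_toFinset] at hS
    have h := card_covers_mul hS.2
    norm_num [hF.1 S hS.1, hT] at h
    omega
  calc #{W ∈ subspacesOfFinrank T 4 | ∃ S ∈ F, S ≤ W}
      ≤ #({S ∈ F.toFinset | S ≤ T}.biUnion
          fun S => {W ∈ subspacesOfFinrank T 4 | S ≤ W}) := by
        refine card_le_card fun W hW => ?_
        simp only [mem_filter, mem_subspacesOfFinrank] at hW
        obtain ⟨⟨hWT, hW⟩, S, hS, hSW⟩ := hW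
        simp only [mem_biUnion, mem_filter, Set.mem_toFinset, mem_subspacesOfFinrank]
        exact ⟨S, ⟨hS, hSW.trans hWT⟩, ⟨hWT, hW⟩, hSW⟩
    _ ≤ ∑ S ∈ {S ∈ F.toFinset | S ≤ T}, #{W ∈ subspacesOfFinrank T 4 | S ≤ W} :=
        card_biUnion_le
    _ = #{S ∈ F.toFinset | S ≤ T} * 3 := sum_const_nat hcovers
    _ ≤ 15 := by have := hF.card_filter_le_le_five hT; omega

end IsSpread23

theorem spread23_poor_spaces (F : Set (Submodule (ZMod 2) V72)) (hF : IsSpread23 F)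
    (T : Submodule (ZMod 2) V72) (hT : Module.finrank (ZMod 2) T = 5) :
    16 ≤ {W : Submodule (ZMod 2) V72 |
      W ≤ T ∧ Module.finrank (ZMod 2) W = 4 ∧ ∀ S ∈ F, ¬ S ≤ W}.ncard := by
  have hpoor : {W : Submodule (ZMod 2) V72 |
      W ≤ T ∧ Module.finrank (ZMod 2) W = 4 ∧ ∀ S ∈ F, ¬ S ≤ W} =
        ↑{W ∈ subspacesOfFinrank T 4 | ¬ ∃ S ∈ F, S ≤ W} := by
    ext W
    simp [and_assoc]
  have hhyperplanes := two_pow_sub_one_le_card_hyperplanes T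
  norm_num [hT] at hhyperplanes
  have hsplit := card_filter_add_card_filter_not (s := subspacesOfFinrank T 4)
    (fun W => ∃ S ∈ F, S ≤ W)
  have hrich := hF.card_filter_exists_le_le_fifteen hT
  rw [hpoor, Set.ncard_coe_finset]
  omega
end

section
/- Let S1 = {L1,...,L5} and S2 = {L1',...,L5'} be two disjoint line spreads of V(4,2), and suppose L5' intersects neither L1 nor L2 nontrivially. Then there exist two distinct lines of S2 each of which intersects both L1 and L2 nontrivially. -/
abbrev V42 := Fin 4 → ZMod 2

/-- A line spread of `V(4,2)`: a set of 2-dimensional subspaces such that every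
nonzero vector lies in exactly one of them. -/
def IsLineSpread (S : Set (Submodule (ZMod 2) V42)) : Prop :=
  (∀ L ∈ S, Module.finrank (ZMod 2) L = 2) ∧
  ∀ v : V42, v ≠ 0 → ∃! L, L ∈ S ∧ v ∈ L

/-!
Over `GF(2)` a line has three nonzero vectors, so a line spread of `V(4,2)` has exactly five
lines, and two distinct lines share at most one nonzero vector. Each of `L1`, `L2` is a line
outside `S2`, so its three nonzero vectors lie on three distinct lines of `S2`, none of them
`L5'`. Two triples among the four lines of `S2 \ {L5'}` share at least two lines.
-/

open Module

section FiniteField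

variable {K V : Type*} [Field K] [AddCommGroup V] [Module K V]

theorem Submodule.finrank_inf_lt_of_ne [FiniteDimensional K V] {M L : Submodule K V}
    (h : finrank K M = finrank K L) (hne : M ≠ L) : finrank K ↥(M ⊓ L) < finrank K M := by
  refine Submodule.finrank_lt_finrank_of_lt (inf_le_left.lt_of_ne fun hML => hne ?_)
  exact Submodule.eq_of_le_of_finrank_eq (hML ▸ inf_le_right) h

theorem Submodule.ncard_sdiff_zero [Finite V] (W : Submodule K V) :
    ((W : Set V) \ {0}).ncard = Nat.card K ^ finrank K W - 1 := by
  rw [Set.ncard_sdiff_singleton_of_mem W.zero_mem, ← Nat.card_coe_set_eq,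
    SetLike.coe_sort_coe, Module.natCard_eq_pow_finrank (K := K)]

end FiniteField

theorem Set.one_lt_ncard_inter_of_subset {α : Type*} {s t u : Set α} (hu : u.Finite)
    (hs : s ⊆ u) (ht : t ⊆ u) (h : u.ncard + 1 < s.ncard + t.ncard) :
    1 < (s ∩ t).ncard := by
  have hunion := Set.ncard_le_ncard (Set.union_subset hs ht) hu
  have := Set.ncard_inter_add_ncard_union s t (hu.subset hs) (hu.subset ht)
  omega

section Spread

variable {V : Type*} [AddCommGroup V] [Module (ZMod 2) V] [Finite V]

theorem Submodule.eq_of_mem_inf_of_finrank_eq_two {M L : Submodule (ZMod 2) V}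
    (hM : finrank (ZMod 2) M = 2) (hL : finrank (ZMod 2) L = 2) (hne : M ≠ L) {x y : V}
    (hx : x ∈ M ⊓ L) (hy : y ∈ M ⊓ L) (hx0 : x ≠ 0) (hy0 : y ≠ 0) : x = y := by
  have hlt := Submodule.finrank_inf_lt_of_ne (hM.trans hL.symm) hne
  rw [hM] at hlt
  have hcard := (M ⊓ L).ncard_sdiff_zero
  rw [Nat.card_zmod] at hcard
  have : ((↑(M ⊓ L) : Set V) \ {0}).ncard ≤ 1 := by
    interval_cases finrank (ZMod 2) ↥(M ⊓ L) <;> omega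
  exact (Set.ncard_le_one (Set.toFinite _)).1 this x ⟨hx, hx0⟩ y ⟨hy, hy0⟩

variable {S : Set (Submodule (ZMod 2) V)}

theorem three_mul_ncard_eq_card_sub_one (hdim : ∀ M ∈ S, finrank (ZMod 2) M = 2)
    (hS : ∀ v : V, v ≠ 0 → ∃! M, M ∈ S ∧ v ∈ M) : 3 * S.ncard = Nat.card V - 1 := by
  have hcover : ⋃ M ∈ S, (M : Set V) \ {0} = {0}ᶜ := by
    ext v
    simp only [Set.mem_iUnion, Set.mem_sdiff, Set.mem_singleton_iff, Set.mem_compl_iff,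
      SetLike.mem_coe, exists_prop]
    refine ⟨fun ⟨_, _, _, hv0⟩ => hv0, fun hv0 => ?_⟩
    obtain ⟨M, hM, hvM⟩ := (hS v hv0).exists
    exact ⟨M, hM, hvM, hv0⟩
  have hdisj : S.PairwiseDisjoint fun M => (M : Set V) \ {0} := by
    refine fun M hM M' hM' hne => Set.disjoint_left.2 fun v hv hv' => hne ?_
    exact (hS v hv.2).unique ⟨hM, hv.1⟩ ⟨hM', hv'.1⟩
  calc 3 * S.ncard = ∑ᶠ M ∈ S, 3 * 1 := by rw [← finsum_one, mul_finsum_mem]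
    _ = ∑ᶠ M ∈ S, ((M : Set V) \ {0}).ncard :=
      finsum_mem_congr rfl fun M hM => by rw [M.ncard_sdiff_zero, Nat.card_zmod, hdim M hM]; rfl
    _ = (⋃ M ∈ S, (M : Set V) \ {0}).ncard :=
      ((Set.toFinite S).ncard_biUnion (fun _ _ => Set.toFinite _) hdisj).symm
    _ = Nat.card V - 1 := by rw [hcover, Set.ncard_compl, Set.ncard_singleton]

theorem three_le_ncard_setOf_inf_ne_bot (hdim : ∀ M ∈ S, finrank (ZMod 2) M = 2)
    (hS : ∀ v : V, v ≠ 0 → ∃! M, M ∈ S ∧ v ∈ M) {L : Submodule (ZMod 2) V}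
    (hL : finrank (ZMod 2) L = 2) (hLS : L ∉ S) : 3 ≤ {M | M ∈ S ∧ M ⊓ L ≠ ⊥}.ncard := by
  choose! f hfS hvf using fun v (hv : v ∈ (L : Set V) \ {0}) => (hS v hv.2).exists
  have h3 : ((L : Set V) \ {0}).ncard = 3 := by rw [L.ncard_sdiff_zero, Nat.card_zmod, hL]; rfl
  rw [← h3]
  refine Set.ncard_le_ncard_of_injOn f (fun v hv => ⟨hfS v hv, ?_⟩) ?_
  · have hvfL : v ∈ f v ⊓ L := ⟨hvf v hv, hv.1⟩
    exact fun hbot => hv.2 ((Submodule.mem_bot _).1 (hbot ▸ hvfL))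
  · intro v hv w hw hvw
    have hne : f v ≠ L := fun h => hLS (h ▸ hfS v hv)
    exact Submodule.eq_of_mem_inf_of_finrank_eq_two (hdim _ (hfS v hv)) hL hne
      ⟨hvf v hv, hv.1⟩ ⟨hvw ▸ hvf w hw, hw.1⟩ hv.2 hw.2

end Spread

theorem two_transversal_lines_general (S1 S2 : Set (Submodule (ZMod 2) V42))
    (h1 : IsLineSpread S1) (h2 : IsLineSpread S2) (hdisj : S1 ∩ S2 = ∅)
    (L1 L2 : Submodule (ZMod 2) V42) (hL1 : L1 ∈ S1) (hL2 : L2 ∈ S1)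
    (L5' : Submodule (ZMod 2) V42) (hL5' : L5' ∈ S2)
    (hm1 : L5' ⊓ L1 = ⊥) (hm2 : L5' ⊓ L2 = ⊥) :
    ∃ M M', M ∈ S2 ∧ M' ∈ S2 ∧ M ≠ M' ∧
      M ⊓ L1 ≠ ⊥ ∧ M ⊓ L2 ≠ ⊥ ∧ M' ⊓ L1 ≠ ⊥ ∧ M' ⊓ L2 ≠ ⊥ := by
  have hmeet : ∀ L ∈ S1, 3 ≤ {M | M ∈ S2 ∧ M ⊓ L ≠ ⊥}.ncard := fun L hL =>
    three_le_ncard_setOf_inf_ne_bot h2.1 h2.2 (h1.1 L hL) fun hL' => hdisj.subset ⟨hL, hL'⟩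
  have hsub : ∀ L, L5' ⊓ L = ⊥ → {M | M ∈ S2 ∧ M ⊓ L ≠ ⊥} ⊆ S2 \ {L5'} :=
    fun L hL M hM => ⟨hM.1, fun hM5 => hM.2 (hM5 ▸ hL)⟩
  have hcard : (S2 \ {L5'}).ncard = 4 := by
    have h15 := three_mul_ncard_eq_card_sub_one h2.1 h2.2
    rw [Nat.card_fun, Nat.card_zmod, Nat.card_fin] at h15
    rw [Set.ncard_sdiff_singleton_of_mem hL5']
    omega
  obtain ⟨M, M', ⟨⟨hM, hM1⟩, -, hM2⟩, ⟨⟨hM', hM'1⟩, -, hM'2⟩, hne⟩ :=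
    (Set.one_lt_ncard_iff (Set.toFinite _)).1 <| Set.one_lt_ncard_inter_of_subset
      (Set.toFinite _) (hsub L1 hm1) (hsub L2 hm2) (by linarith [hmeet L1 hL1, hmeet L2 hL2])
  exact ⟨M, M', hM, hM', hne, hM1, hM2, hM'1, hM'2⟩

theorem two_transversal_lines (S1 S2 : Set (Submodule (ZMod 2) V42))
    (h1 : IsLineSpread S1) (h2 : IsLineSpread S2) (hdisj : S1 ∩ S2 = ∅)
    (L1 L2 : Submodule (ZMod 2) V42) (hL1 : L1 ∈ S1) (hL2 : L2 ∈ S1) (h12 : L1 ≠ L2)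
    (L5' : Submodule (ZMod 2) V42) (hL5' : L5' ∈ S2)
    (hm1 : L5' ⊓ L1 = ⊥) (hm2 : L5' ⊓ L2 = ⊥) :
    ∃ M M', M ∈ S2 ∧ M' ∈ S2 ∧ M ≠ M' ∧
      M ⊓ L1 ≠ ⊥ ∧ M ⊓ L2 ≠ ⊥ ∧ M' ⊓ L1 ≠ ⊥ ∧ M' ⊓ L2 ≠ ⊥ :=
  two_transversal_lines_general S1 S2 h1 h2 hdisj L1 L2 hL1 hL2 L5' hL5' hm1 hm2
end

section
/- Let F be a (2,3)-spread of V(7,2), U a 6-dimensional subspace all of whose points are alpha-points of F, W a 4-dimensional subspace of U containing no member of F, and T a 5-dimensional subspace of U containing W with alpha-point P not in W. Then the intersections with W of the members of F contained in T form a line spread of W (a partition of the nonzero vectors of W into five 2-dimensional subspaces). -/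
/-- `P` is an alpha-point of `F`: `P` is a point, and every 5-dimensional subspace
containing two members of `F` through `P` has all its members of `F` through `P`. -/
def IsAlphaPoint (F : Set (Submodule (ZMod 2) V72)) (P : Submodule (ZMod 2) V72) : Prop :=
  Module.finrank (ZMod 2) P = 1 ∧
  ∀ T : Submodule (ZMod 2) V72, Module.finrank (ZMod 2) T = 5 →
    (∃ S1 S2, S1 ∈ F ∧ S2 ∈ F ∧ S1 ≠ S2 ∧ S1 ≤ T ∧ S2 ≤ T ∧ P ≤ S1 ∧ P ≤ S2) →
    ∀ S ∈ F, S ≤ T → P ≤ S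

/-- `P` is an alpha-point of the 5-dimensional subspace `T`: a point contained in
all members of `F` lying in `T`. -/
def IsAlphaPointOf (F : Set (Submodule (ZMod 2) V72)) (T P : Submodule (ZMod 2) V72) : Prop :=
  Module.finrank (ZMod 2) P = 1 ∧ P ≤ T ∧ ∀ S ∈ F, S ≤ T → P ≤ S

open Module Submodule Finset






lemma zmod2_cases (c : ZMod 2) : c = 0 ∨ c = 1 := by revert c; decide

lemma v72_neg (x : V72) : -x = x := by
  funext i
  exact CharTwo.neg_eq (x i)

lemma v72_finrank : Module.finrank (ZMod 2) V72 = 7 := by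
  simp [Module.finrank_pi]

noncomputable def fsetV (A : Set V72) : Finset V72 := A.toFinite.toFinset

lemma mem_fsetV {A : Set V72} {x : V72} : x ∈ fsetV A ↔ x ∈ A := Set.Finite.mem_toFinset _

lemma fsetV_mono {A B : Set V72} (h : A ⊆ B) : fsetV A ⊆ fsetV B := by
  intro x hx; rw [mem_fsetV] at *; exact h hx

lemma fsetV_card (A : Submodule (ZMod 2) V72) :
    (fsetV (A : Set V72)).card = 2 ^ Module.finrank (ZMod 2) A := by
  classical
  have h1 : (fsetV (A : Set V72)).card = Nat.card A := by
    rw [fsetV, ← Set.ncard_eq_toFinset_card, ← Nat.card_coe_set_eq]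
    rfl
  rw [h1]
  haveI : Fintype A := Fintype.ofFinite _
  rw [Nat.card_eq_fintype_card]
  have h2 := card_eq_pow_finrank (K := ZMod 2) (V := A)
  rwa [ZMod.card] at h2

lemma finrank_span_pair {v w : V72} (hv : v ≠ 0) (hw : w ≠ 0) (hvw : v ≠ w) :
    Module.finrank (ZMod 2) ↥(Submodule.span (ZMod 2) ({v, w} : Set V72)) = 2 := by
  have hli : LinearIndependent (ZMod 2) ![v, w] := by
    rw [LinearIndependent.pair_iff]
    intro s t h
    rcases zmod2_cases s with rfl | rfl <;> rcases zmod2_cases t with rfl | rfl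
    · exact ⟨rfl, rfl⟩
    · exfalso; apply hw; simpa using h
    · exfalso; apply hv; simpa using h
    · exfalso
      apply hvw
      have h' : v + w = 0 := by simpa using h
      have : v = -w := eq_neg_of_add_eq_zero_left h'
      rwa [v72_neg] at this
  have hr : Set.range ![v, w] = ({v, w} : Set V72) := by
    simp [Matrix.range_cons, Matrix.range_empty, Set.pair_comm]
  have := finrank_span_eq_card (R := ZMod 2) hli
  rw [hr] at this
  simpa using this

lemma span_pair_le {v w : V72} {S : Submodule (ZMod 2) V72} (hv : v ∈ S) (hw : w ∈ S) :
    Submodule.span (ZMod 2) ({v, w} : Set V72) ≤ S := by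
  rw [Submodule.span_le]
  rintro x hx
  rcases hx with rfl | hx
  · exact hv
  · rcases hx with rfl; exact hw

lemma block_eq {F : Set (Submodule (ZMod 2) V72)} (hF : IsSpread23 F)
    {S1 S2 : Submodule (ZMod 2) V72} (h1 : S1 ∈ F) (h2 : S2 ∈ F)
    {v w : V72} (hv1 : v ∈ S1) (hw1 : w ∈ S1) (hv2 : v ∈ S2) (hw2 : w ∈ S2)
    (hv : v ≠ 0) (hw : w ≠ 0) (hvw : v ≠ w) : S1 = S2 := by
  obtain ⟨S, -, huniq⟩ := hF.2 _ (finrank_span_pair hv hw hvw)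
  have e1 := huniq S1 ⟨h1, span_pair_le hv1 hw1⟩
  have e2 := huniq S2 ⟨h2, span_pair_le hv2 hw2⟩
  rw [e1, e2]

/-- A 3-dim block not inside `W` containing two independent vectors of `W` meets `W` in dim 2. -/
lemma finrank_trace {S W : Submodule (ZMod 2) V72}
    (hS3 : Module.finrank (ZMod 2) S = 3) (hSW : ¬ S ≤ W)
    {w1 w2 : V72} (h1S : w1 ∈ S) (h1W : w1 ∈ W) (h2S : w2 ∈ S) (h2W : w2 ∈ W)
    (h10 : w1 ≠ 0) (h20 : w2 ≠ 0) (h12 : w1 ≠ w2) :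
    Module.finrank (ZMod 2) ↥(S ⊓ W) = 2 := by
  have hle : Submodule.span (ZMod 2) ({w1, w2} : Set V72) ≤ S ⊓ W :=
    le_inf (span_pair_le h1S h2S) (span_pair_le h1W h2W)
  have h2 : 2 ≤ Module.finrank (ZMod 2) ↥(S ⊓ W) := by
    calc 2 = Module.finrank (ZMod 2) ↥(Submodule.span (ZMod 2) ({w1, w2} : Set V72)) :=
            (finrank_span_pair h10 h20 h12).symm
      _ ≤ _ := Submodule.finrank_mono hle
  have h3 : Module.finrank (ZMod 2) ↥(S ⊓ W) ≤ 3 := by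
    rw [← hS3]; exact Submodule.finrank_mono inf_le_left
  have hne : Module.finrank (ZMod 2) ↥(S ⊓ W) ≠ 3 := by
    intro h
    apply hSW
    have heq : S ⊓ W = S := Submodule.eq_of_le_of_finrank_le inf_le_left (by rw [h, hS3])
    rw [← heq]; exact inf_le_right
  omega

/-- A 3-dim block not inside `W` contained with `W` in a 5-space meets `W` in dim 2. -/
lemma finrank_trace' {S W X : Submodule (ZMod 2) V72}
    (hS3 : Module.finrank (ZMod 2) S = 3) (hW4 : Module.finrank (ZMod 2) W = 4)
    (hSW : ¬ S ≤ W) (hWX : W ≤ X) (hSX : S ≤ X) (hX5 : Module.finrank (ZMod 2) X = 5) :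
    Module.finrank (ZMod 2) ↥(S ⊓ W) = 2 := by
  have key := Submodule.finrank_sup_add_finrank_inf_eq S W
  rw [hS3, hW4] at key
  have hsup : Module.finrank (ZMod 2) ↥(S ⊔ W) ≤ 5 := by
    rw [← hX5]; exact Submodule.finrank_mono (sup_le hSX hWX)
  have h3 : Module.finrank (ZMod 2) ↥(S ⊓ W) ≤ 3 := by
    rw [← hS3]; exact Submodule.finrank_mono inf_le_left
  have hne : Module.finrank (ZMod 2) ↥(S ⊓ W) ≠ 3 := by
    intro h
    apply hSW
    have heq : S ⊓ W = S := Submodule.eq_of_le_of_finrank_le inf_le_left (by rw [h, hS3])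
    rw [← heq]; exact inf_le_right
  omega

/-- The traces on `W` of the members of `F` in `T` form a line spread of `W`. -/
theorem traces_form_line_spread (F : Set (Submodule (ZMod 2) V72)) (hF : IsSpread23 F)
    (U : Submodule (ZMod 2) V72) (hU : Module.finrank (ZMod 2) U = 6)
    (hall : ∀ P : Submodule (ZMod 2) V72, Module.finrank (ZMod 2) P = 1 → P ≤ U →
      IsAlphaPoint F P)
    (W : Submodule (ZMod 2) V72) (hWU : W ≤ U) (hW : Module.finrank (ZMod 2) W = 4)
    (hpoor : ∀ S ∈ F, ¬ S ≤ W)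
    (T : Submodule (ZMod 2) V72) (hWT : W ≤ T) (hTU : T ≤ U)
    (hT : Module.finrank (ZMod 2) T = 5)
    (P : Submodule (ZMod 2) V72) (hP : IsAlphaPointOf F T P) (hPW : ¬ P ≤ W) :
    (∀ S ∈ F, S ≤ T → Module.finrank (ZMod 2) (S ⊓ W : Submodule (ZMod 2) V72) = 2) ∧
    (∀ v : V72, v ∈ W → v ≠ 0 →
      ∃! L : Submodule (ZMod 2) V72, (∃ S ∈ F, S ≤ T ∧ L = S ⊓ W) ∧ v ∈ L) := by
  classical
  -- Part 1
  have part1 : ∀ S ∈ F, S ≤ T → Module.finrank (ZMod 2) ↥(S ⊓ W) = 2 := by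
    intro S hS hST
    exact finrank_trace' (hF.1 S hS) hW (hpoor S hS) hWT hST hT
  refine ⟨part1, ?_⟩
  intro v hvW hv0
  -- the point P : a generator p
  obtain ⟨p, hpP, hp0⟩ : ∃ p, p ∈ P ∧ p ≠ 0 := by
    have hne : P ≠ ⊥ := by
      intro h
      have h1 := hP.1
      rw [h, finrank_bot] at h1
      exact absurd h1 (by norm_num)
    exact Submodule.exists_mem_ne_zero_of_ne_bot hne
  have hPspan : Submodule.span (ZMod 2) {p} = P := by
    apply Submodule.eq_of_le_of_finrank_le
    · rwa [Submodule.span_singleton_le_iff_mem]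
    · rw [hP.1, finrank_span_singleton hp0]
  have hpW : p ∉ W := by
    intro h
    exact hPW (hPspan ▸ (Submodule.span_singleton_le_iff_mem p W).2 h)
  have hblk : ∀ S ∈ F, S ≤ T → p ∈ S := fun S hS hST => hP.2.2 S hS hST hpP
  -- Finite instances
  haveI : Finite (Submodule (ZMod 2) V72) :=
    Finite.of_injective (SetLike.coe : Submodule (ZMod 2) V72 → Set V72) SetLike.coe_injective
  -- blocks with 2-dimensional trace on W
  set BF : Finset (Submodule (ZMod 2) V72) :=
    (Set.toFinite {S : Submodule (ZMod 2) V72 |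
      S ∈ F ∧ Module.finrank (ZMod 2) ↥(S ⊓ W) = 2}).toFinset with hBFdef
  have memBF : ∀ {S : Submodule (ZMod 2) V72},
      S ∈ BF ↔ S ∈ F ∧ Module.finrank (ZMod 2) ↥(S ⊓ W) = 2 := by
    intro S; rw [hBFdef, Set.Finite.mem_toFinset]; rfl
  -- 5-spaces over W
  set XF : Finset (Submodule (ZMod 2) V72) :=
    (Set.toFinite {X : Submodule (ZMod 2) V72 |
      W ≤ X ∧ Module.finrank (ZMod 2) X = 5}).toFinset with hXFdef
  have memXF : ∀ {X : Submodule (ZMod 2) V72},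
      X ∈ XF ↔ W ≤ X ∧ Module.finrank (ZMod 2) X = 5 := by
    intro X; rw [hXFdef, Set.Finite.mem_toFinset]; rfl
  -- basic: x ∉ W → x ≠ 0, W ⊔ span x is a 5-space
  have hx0 : ∀ {x : V72}, x ∉ W → x ≠ 0 := by
    rintro x hx rfl; exact hx (Submodule.zero_mem W)
  have hsup5 : ∀ {x : V72}, x ∉ W →
      W ≤ W ⊔ Submodule.span (ZMod 2) {x} ∧
      Module.finrank (ZMod 2) ↥(W ⊔ Submodule.span (ZMod 2) {x}) = 5 := by
    intro x hx
    refine ⟨le_sup_left, ?_⟩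
    have hinf : W ⊓ Submodule.span (ZMod 2) {x} = ⊥ := by
      rw [eq_bot_iff]
      intro z hz
      rw [Submodule.mem_inf] at hz
      obtain ⟨hz1, hz2⟩ := hz
      rw [Submodule.mem_span_singleton] at hz2
      obtain ⟨c, rfl⟩ := hz2
      rcases zmod2_cases c with rfl | rfl
      · simp
      · exact absurd (by simpa using hz1) hx
    have key := Submodule.finrank_sup_add_finrank_inf_eq W (Submodule.span (ZMod 2) {x})
    rw [hinf, hW, finrank_span_singleton (hx0 hx), finrank_bot] at key
    omega
  have hXuniq : ∀ {X : Submodule (ZMod 2) V72} {x : V72}, X ∈ XF → x ∈ X → x ∉ W →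
      X = W ⊔ Submodule.span (ZMod 2) {x} := by
    intro X x hX hxX hxW
    rcases memXF.1 hX with ⟨hWX, hX5⟩
    refine (Submodule.eq_of_le_of_finrank_le
      (sup_le hWX ((Submodule.span_singleton_le_iff_mem x X).2 hxX)) ?_).symm
    rw [hX5, (hsup5 hxW).2]
  -- counting: |XF| = 7
  have hXFcard : XF.card = 7 := by
    have hdisj : ∀ X ∈ XF, ∀ X' ∈ XF, X ≠ X' →
        Disjoint (fsetV (X : Set V72) \ fsetV (W : Set V72))
                 (fsetV (X' : Set V72) \ fsetV (W : Set V72)) := by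
      intro X hX X' hX' hne
      rw [Finset.disjoint_left]
      intro y hy hy'
      rw [Finset.mem_sdiff, mem_fsetV, mem_fsetV] at hy hy'
      exact hne ((hXuniq hX hy.1 hy.2).trans (hXuniq hX' hy'.1 hy'.2).symm)
    have hunion : XF.biUnion (fun X => fsetV (X : Set V72) \ fsetV (W : Set V72))
        = fsetV ((⊤ : Submodule (ZMod 2) V72) : Set V72) \ fsetV (W : Set V72) := by
      apply Finset.Subset.antisymm
      · intro y hy
        rw [Finset.mem_biUnion] at hy
        obtain ⟨X, hX, hyX⟩ := hy
        rw [Finset.mem_sdiff] at hyX ⊢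
        exact ⟨mem_fsetV.2 (by exact Submodule.mem_top), hyX.2⟩
      · intro y hy
        rw [Finset.mem_sdiff, mem_fsetV, mem_fsetV] at hy
        have hyW : y ∉ W := hy.2
        rw [Finset.mem_biUnion]
        refine ⟨W ⊔ Submodule.span (ZMod 2) {y}, memXF.2 ⟨(hsup5 hyW).1, (hsup5 hyW).2⟩, ?_⟩
        rw [Finset.mem_sdiff, mem_fsetV]
        exact ⟨Submodule.mem_sup_right (Submodule.mem_span_singleton_self y),
          by rwa [mem_fsetV]⟩
    have hcards := Finset.card_biUnion hdisj
    rw [hunion] at hcards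
    have hL : (fsetV ((⊤ : Submodule (ZMod 2) V72) : Set V72) \ fsetV (W : Set V72)).card
        = 112 := by
      rw [Finset.card_sdiff_of_subset (fsetV_mono (by intro z _; exact Submodule.mem_top)),
        fsetV_card, fsetV_card, hW, finrank_top, v72_finrank]
      norm_num
    have hR : ∀ X ∈ XF, (fsetV (X : Set V72) \ fsetV (W : Set V72)).card = 16 := by
      intro X hX
      rcases memXF.1 hX with ⟨hWX, hX5⟩
      rw [Finset.card_sdiff_of_subset (fsetV_mono (SetLike.coe_subset_coe.2 hWX)),
        fsetV_card, fsetV_card, hW, hX5]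
      norm_num
    rw [Finset.sum_congr rfl hR, Finset.sum_const, smul_eq_mul] at hcards
    omega
  -- nonzero points of W
  set Nf : Finset V72 := fsetV (W : Set V72) \ {0} with hNfdef
  have memNf : ∀ {y : V72}, y ∈ Nf ↔ y ∈ W ∧ y ≠ 0 := by
    intro y
    rw [hNfdef, Finset.mem_sdiff, mem_fsetV, Finset.mem_singleton]
    rfl
  have hNfcard : Nf.card = 15 := by
    rw [hNfdef, Finset.card_sdiff_of_subset (by simp [mem_fsetV]), fsetV_card, hW]
    simp
  -- per-point count: 7 blocks of BF through each nonzero point of W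
  have hBv : ∀ v' : V72, v' ∈ W → v' ≠ 0 →
      (BF.filter (fun S => v' ∈ S)).card = 7 := by
    intro v' hv'W hv'0
    have hmem : ∀ {S}, S ∈ BF.filter (fun S => v' ∈ S) ↔
        (S ∈ F ∧ Module.finrank (ZMod 2) ↥(S ⊓ W) = 2) ∧ v' ∈ S := by
      intro S; rw [Finset.mem_filter, memBF]
    have hdisj : ∀ S ∈ BF.filter (fun S => v' ∈ S), ∀ S' ∈ BF.filter (fun S => v' ∈ S),
        S ≠ S' → Disjoint (fsetV ((S ⊓ W : Submodule (ZMod 2) V72) : Set V72) \ {0, v'})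
                          (fsetV ((S' ⊓ W : Submodule (ZMod 2) V72) : Set V72) \ {0, v'}) := by
      intro S hS S' hS' hne
      rw [Finset.disjoint_left]
      intro y hy hy'
      rw [Finset.mem_sdiff, mem_fsetV] at hy hy'
      obtain ⟨hyS, hyn⟩ := hy
      simp only [Finset.mem_insert, Finset.mem_singleton, not_or] at hyn
      have hyS' := hy'.1
      rw [SetLike.mem_coe, Submodule.mem_inf] at hyS hyS'
      exact hne (block_eq hF (hmem.1 hS).1.1 (hmem.1 hS').1.1 hyS.1 (hmem.1 hS).2
        hyS'.1 (hmem.1 hS').2 hyn.1 hv'0 hyn.2)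
    have hunion : (BF.filter (fun S => v' ∈ S)).biUnion
        (fun S => fsetV ((S ⊓ W : Submodule (ZMod 2) V72) : Set V72) \ {0, v'})
        = fsetV (W : Set V72) \ {0, v'} := by
      apply Finset.Subset.antisymm
      · intro y hy
        rw [Finset.mem_biUnion] at hy
        obtain ⟨S, hS, hyS⟩ := hy
        rw [Finset.mem_sdiff, mem_fsetV] at hyS ⊢
        rw [SetLike.mem_coe, Submodule.mem_inf] at hyS
        exact ⟨hyS.1.2, hyS.2⟩
      · intro y hy
        rw [Finset.mem_sdiff, mem_fsetV] at hy
        obtain ⟨hyW, hyn⟩ := hy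
        have hyn' := hyn
        simp only [Finset.mem_insert, Finset.mem_singleton, not_or] at hyn'
        obtain ⟨hy0, hyv⟩ := hyn'
        obtain ⟨S, ⟨hSF, hle⟩, -⟩ := hF.2 _ (finrank_span_pair hv'0 hy0 (Ne.symm hyv))
        have hv'S : v' ∈ S := hle (Submodule.subset_span (by simp))
        have hyS : y ∈ S := hle (Submodule.subset_span (by simp))
        have htr : Module.finrank (ZMod 2) ↥(S ⊓ W) = 2 :=
          finrank_trace (hF.1 S hSF) (hpoor S hSF) hv'S hv'W hyS hyW hv'0 hy0 (Ne.symm hyv)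
        refine Finset.mem_biUnion.2 ⟨S, hmem.2 ⟨⟨hSF, htr⟩, hv'S⟩, ?_⟩
        rw [Finset.mem_sdiff, mem_fsetV]
        exact ⟨Submodule.mem_inf.2 ⟨hyS, hyW⟩, hyn⟩
    have hcards := Finset.card_biUnion hdisj
    rw [hunion] at hcards
    have hL : (fsetV (W : Set V72) \ {0, v'}).card = 14 := by
      rw [Finset.card_sdiff_of_subset ?_, fsetV_card, hW]
      · rw [Finset.card_insert_of_notMem (by simp [Ne.symm hv'0]), Finset.card_singleton]
        norm_num
      · intro y hy
        simp only [Finset.mem_insert, Finset.mem_singleton] at hy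
        rcases hy with rfl | rfl
        · exact mem_fsetV.2 (Submodule.zero_mem W)
        · exact mem_fsetV.2 hv'W
    have hR : ∀ S ∈ BF.filter (fun S => v' ∈ S),
        (fsetV ((S ⊓ W : Submodule (ZMod 2) V72) : Set V72) \ {0, v'}).card = 2 := by
      intro S hS
      rw [Finset.card_sdiff_of_subset ?_, fsetV_card, (hmem.1 hS).1.2]
      · rw [Finset.card_insert_of_notMem (by simp [Ne.symm hv'0]), Finset.card_singleton]
        norm_num
      · intro y hy
        simp only [Finset.mem_insert, Finset.mem_singleton] at hy
        rcases hy with rfl | rfl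
        · exact mem_fsetV.2 (Submodule.zero_mem _)
        · exact mem_fsetV.2 (Submodule.mem_inf.2 ⟨(hmem.1 hS).2, hv'W⟩)
    rw [hL, Finset.sum_congr rfl hR, Finset.sum_const, smul_eq_mul] at hcards
    omega
  -- traces as finsets
  have htrcard : ∀ {S : Submodule (ZMod 2) V72}, S ∈ BF →
      (fsetV ((S ⊓ W : Submodule (ZMod 2) V72) : Set V72) \ {0}).card = 3 := by
    intro S hS
    rw [Finset.card_sdiff_of_subset (by simp [mem_fsetV]), fsetV_card, (memBF.1 hS).2]
    simp
  have htrace : ∀ {S : Submodule (ZMod 2) V72}, S ∈ BF →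
      (Nf.filter (fun y => y ∈ S))
        = fsetV ((S ⊓ W : Submodule (ZMod 2) V72) : Set V72) \ {0} := by
    intro S hS
    ext y
    simp only [Finset.mem_filter, Finset.mem_sdiff, mem_fsetV, Finset.mem_singleton,
      SetLike.mem_coe, Submodule.mem_inf, memNf]
    tauto
  -- total count: |BF| = 35
  have hBFcard : BF.card = 35 := by
    have h1 : ∑ y ∈ Nf, (BF.filter (fun S => y ∈ S)).card = 105 := by
      rw [Finset.sum_congr rfl (fun y hy => hBv y (memNf.1 hy).1 (memNf.1 hy).2),
        Finset.sum_const, hNfcard]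
      norm_num
    have h2 : ∑ y ∈ Nf, (BF.filter (fun S => y ∈ S)).card
        = ∑ S ∈ BF, (Nf.filter (fun y => y ∈ S)).card := by
      simp_rw [Finset.card_filter]
      exact Finset.sum_comm
    have h3 : ∀ S ∈ BF, (Nf.filter (fun y => y ∈ S)).card = 3 := by
      intro S hS
      rw [htrace hS]
      exact htrcard hS
    rw [h2, Finset.sum_congr rfl h3, Finset.sum_const, smul_eq_mul] at h1
    omega
  -- each fiber has at most 5 blocks
  have hfib : ∀ X ∈ XF, (BF.filter (fun S => W ⊔ S = X)).card ≤ 5 := by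
    intro X hX
    have hmemX : ∀ {S}, S ∈ BF.filter (fun S => W ⊔ S = X) ↔
        (S ∈ F ∧ Module.finrank (ZMod 2) ↥(S ⊓ W) = 2) ∧ W ⊔ S = X := by
      intro S; rw [Finset.mem_filter, memBF]
    have hSleX : ∀ {S}, S ∈ BF.filter (fun S => W ⊔ S = X) → S ≤ X :=
      fun hS => le_sup_right.trans_eq (hmemX.1 hS).2
    by_cases hcase : ∃ S1, S1 ∈ BF.filter (fun S => W ⊔ S = X) ∧
        ∃ S2, S2 ∈ BF.filter (fun S => W ⊔ S = X) ∧
        ∃ x : V72, S1 ≠ S2 ∧ x ≠ 0 ∧ x ∈ S1 ∧ x ∈ S2 ∧ x ∈ W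
    · obtain ⟨S1, hS1, S2, hS2, x, hne, hx0', hxS1, hxS2, hxW⟩ := hcase
      have hα := hall (Submodule.span (ZMod 2) {x}) (finrank_span_singleton hx0')
        ((Submodule.span_singleton_le_iff_mem x U).2 (hWU hxW))
      have hxall : ∀ S ∈ F, S ≤ X → x ∈ S := by
        intro S hS hSX
        have hres := hα.2 X (memXF.1 hX).2 ⟨S1, S2, (hmemX.1 hS1).1.1, (hmemX.1 hS2).1.1, hne,
          hSleX hS1, hSleX hS2,
          (Submodule.span_singleton_le_iff_mem x S1).2 hxS1,
          (Submodule.span_singleton_le_iff_mem x S2).2 hxS2⟩ S hS hSX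
        exact (Submodule.span_singleton_le_iff_mem x S).1 hres
      have hdisj : ∀ S ∈ BF.filter (fun S => W ⊔ S = X),
          ∀ S' ∈ BF.filter (fun S => W ⊔ S = X), S ≠ S' →
          Disjoint (fsetV (S : Set V72) \ {0, x}) (fsetV (S' : Set V72) \ {0, x}) := by
        intro S hS S' hS' hne'
        rw [Finset.disjoint_left]
        intro y hy hy'
        rw [Finset.mem_sdiff, mem_fsetV] at hy hy'
        obtain ⟨hyS, hyn⟩ := hy
        simp only [Finset.mem_insert, Finset.mem_singleton, not_or] at hyn
        exact hne' (block_eq hF (hmemX.1 hS).1.1 (hmemX.1 hS').1.1 hyS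
          (hxall S (hmemX.1 hS).1.1 (hSleX hS)) hy'.1
          (hxall S' (hmemX.1 hS').1.1 (hSleX hS')) hyn.1 hx0' hyn.2)
      have hsub : (BF.filter (fun S => W ⊔ S = X)).biUnion
          (fun S => fsetV (S : Set V72) \ {0, x}) ⊆ fsetV (X : Set V72) \ {0, x} := by
        intro y hy
        rw [Finset.mem_biUnion] at hy
        obtain ⟨S, hS, hyS⟩ := hy
        rw [Finset.mem_sdiff] at hyS ⊢
        exact ⟨fsetV_mono (SetLike.coe_subset_coe.2 (hSleX hS)) hyS.1, hyS.2⟩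
      have hcard1 := Finset.card_biUnion hdisj
      have hcard2 := Finset.card_le_card hsub
      rw [hcard1] at hcard2
      have heach : ∀ S ∈ BF.filter (fun S => W ⊔ S = X),
          (fsetV (S : Set V72) \ {0, x}).card = 6 := by
        intro S hS
        rw [Finset.card_sdiff_of_subset ?_, fsetV_card, hF.1 S (hmemX.1 hS).1.1]
        · rw [Finset.card_insert_of_notMem (by simp [Ne.symm hx0']), Finset.card_singleton]
          norm_num
        · intro y hy
          simp only [Finset.mem_insert, Finset.mem_singleton] at hy
          rcases hy with rfl | rfl
          · exact mem_fsetV.2 (Submodule.zero_mem S)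
          · exact mem_fsetV.2 (hxall S (hmemX.1 hS).1.1 (hSleX hS))
      have hXc : (fsetV (X : Set V72) \ {0, x}).card = 30 := by
        rw [Finset.card_sdiff_of_subset ?_, fsetV_card, (memXF.1 hX).2]
        · rw [Finset.card_insert_of_notMem (by simp [Ne.symm hx0']), Finset.card_singleton]
          norm_num
        · intro y hy
          simp only [Finset.mem_insert, Finset.mem_singleton] at hy
          rcases hy with rfl | rfl
          · exact mem_fsetV.2 (Submodule.zero_mem X)
          · exact mem_fsetV.2 (hSleX hS1 hxS1)
      rw [Finset.sum_congr rfl heach, Finset.sum_const, smul_eq_mul] at hcard2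
      rw [hXc] at hcard2
      omega
    · push_neg at hcase
      have hdisj : ∀ S ∈ BF.filter (fun S => W ⊔ S = X),
          ∀ S' ∈ BF.filter (fun S => W ⊔ S = X), S ≠ S' →
          Disjoint (fsetV ((S ⊓ W : Submodule (ZMod 2) V72) : Set V72) \ {0})
                   (fsetV ((S' ⊓ W : Submodule (ZMod 2) V72) : Set V72) \ {0}) := by
        intro S hS S' hS' hne
        rw [Finset.disjoint_left]
        intro y hy hy'
        rw [Finset.mem_sdiff, mem_fsetV, Finset.mem_singleton] at hy hy'
        obtain ⟨hyS, hy0⟩ := hy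
        rw [SetLike.mem_coe, Submodule.mem_inf] at hyS
        have hyS' := hy'.1
        rw [SetLike.mem_coe, Submodule.mem_inf] at hyS'
        exact hcase S hS S' hS' y hne hy0 hyS.1 hyS'.1 hyS.2
      have hsub : (BF.filter (fun S => W ⊔ S = X)).biUnion
          (fun S => fsetV ((S ⊓ W : Submodule (ZMod 2) V72) : Set V72) \ {0}) ⊆ Nf := by
        intro y hy
        rw [Finset.mem_biUnion] at hy
        obtain ⟨S, hS, hyS⟩ := hy
        rw [Finset.mem_sdiff, mem_fsetV, Finset.mem_singleton] at hyS
        have := hyS.1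
        rw [SetLike.mem_coe, Submodule.mem_inf] at this
        exact memNf.2 ⟨this.2, hyS.2⟩
      have hcard1 := Finset.card_biUnion hdisj
      have hcard2 := Finset.card_le_card hsub
      rw [hcard1] at hcard2
      have heach : ∀ S ∈ BF.filter (fun S => W ⊔ S = X),
          (fsetV ((S ⊓ W : Submodule (ZMod 2) V72) : Set V72) \ {0}).card = 3 :=
        fun S hS => htrcard (Finset.mem_filter.1 hS).1
      rw [Finset.sum_congr rfl heach, Finset.sum_const, smul_eq_mul, hNfcard] at hcard2
      omega
  -- blocks in BF map into XF
  have hmapsto : ∀ S ∈ BF, W ⊔ S ∈ XF := by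
    intro S hS
    rcases memBF.1 hS with ⟨hSF, hS2⟩
    have key := Submodule.finrank_sup_add_finrank_inf_eq W S
    rw [inf_comm] at key
    rw [hW, hF.1 S hSF, hS2] at key
    rw [memXF]
    exact ⟨le_sup_left, by omega⟩
  have hTXF : T ∈ XF := memXF.2 ⟨hWT, hT⟩
  -- pigeonhole: at least 5 blocks in T
  have hBTcard : 5 ≤ (BF.filter (fun S => W ⊔ S = T)).card := by
    have hsum : 35 = ∑ X ∈ XF, (BF.filter (fun S => W ⊔ S = X)).card := by
      have := Finset.card_eq_sum_card_fiberwise hmapsto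
      rw [hBFcard] at this
      simpa using this
    have hsplit : (BF.filter (fun S => W ⊔ S = T)).card
        + ∑ X ∈ XF.erase T, (BF.filter (fun S => W ⊔ S = X)).card
        = ∑ X ∈ XF, (BF.filter (fun S => W ⊔ S = X)).card :=
      Finset.add_sum_erase XF (fun X => (BF.filter (fun S => W ⊔ S = X)).card) hTXF
    have hrest : (∑ X ∈ XF.erase T, (BF.filter (fun S => W ⊔ S = X)).card) ≤ 30 := by
      have hb := Finset.sum_le_card_nsmul (XF.erase T)
        (fun X => (BF.filter (fun S => W ⊔ S = X)).card) 5
        (fun X hX => hfib X (Finset.mem_of_mem_erase hX))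
      have hcard : (XF.erase T).card = 6 := by
        rw [Finset.card_erase_of_mem hTXF, hXFcard]
      rw [hcard] at hb
      simpa using hb
    omega
  -- blocks in T
  have hBTprop : ∀ S ∈ BF.filter (fun S => W ⊔ S = T), S ∈ F ∧ S ≤ T ∧ p ∈ S := by
    intro S hS
    rw [Finset.mem_filter] at hS
    have hSF := (memBF.1 hS.1).1
    have hST : S ≤ T := le_sup_right.trans_eq hS.2
    exact ⟨hSF, hST, hblk S hSF hST⟩
  -- choose 5 blocks in T; their traces partition Nf
  obtain ⟨E, hEsub, hEcard⟩ := Finset.exists_subset_card_eq hBTcard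
  have hEBF : ∀ S ∈ E, S ∈ BF := fun S hS => (Finset.mem_filter.1 (hEsub hS)).1
  have hcover : Nf = E.biUnion
      (fun S => fsetV ((S ⊓ W : Submodule (ZMod 2) V72) : Set V72) \ {0}) := by
    have hdisj : ∀ S ∈ E, ∀ S' ∈ E, S ≠ S' →
        Disjoint (fsetV ((S ⊓ W : Submodule (ZMod 2) V72) : Set V72) \ {0})
                 (fsetV ((S' ⊓ W : Submodule (ZMod 2) V72) : Set V72) \ {0}) := by
      intro S hS S' hS' hne
      obtain ⟨hSF, hST, hpS⟩ := hBTprop S (hEsub hS)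
      obtain ⟨hS'F, hS'T, hpS'⟩ := hBTprop S' (hEsub hS')
      rw [Finset.disjoint_left]
      intro y hy hy'
      rw [Finset.mem_sdiff, mem_fsetV, Finset.mem_singleton] at hy hy'
      obtain ⟨hyS, hy0⟩ := hy
      rw [SetLike.mem_coe, Submodule.mem_inf] at hyS
      have hyS' := hy'.1
      rw [SetLike.mem_coe, Submodule.mem_inf] at hyS'
      have hyp : y ≠ p := fun h => hpW (h ▸ hyS.2)
      exact hne (block_eq hF hSF hS'F hyS.1 hpS hyS'.1 hpS' hy0 hp0 hyp)
    have hsub : E.biUnion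
        (fun S => fsetV ((S ⊓ W : Submodule (ZMod 2) V72) : Set V72) \ {0}) ⊆ Nf := by
      intro y hy
      rw [Finset.mem_biUnion] at hy
      obtain ⟨S, hS, hyS⟩ := hy
      rw [Finset.mem_sdiff, mem_fsetV, Finset.mem_singleton] at hyS
      have := hyS.1
      rw [SetLike.mem_coe, Submodule.mem_inf] at this
      exact memNf.2 ⟨this.2, hyS.2⟩
    have hbcard : (E.biUnion
        (fun S => fsetV ((S ⊓ W : Submodule (ZMod 2) V72) : Set V72) \ {0})).card = 15 := by
      rw [Finset.card_biUnion hdisj,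
        Finset.sum_congr rfl (fun S hS => htrcard (hEBF S hS)),
        Finset.sum_const, smul_eq_mul, hEcard]
    exact (Finset.eq_of_subset_of_card_le hsub (by rw [hbcard, hNfcard])).symm
  -- conclude
  have hvNf : v ∈ Nf := memNf.2 ⟨hvW, hv0⟩
  rw [hcover, Finset.mem_biUnion] at hvNf
  obtain ⟨S, hSE, hvS⟩ := hvNf
  obtain ⟨hSF, hST, hpS⟩ := hBTprop S (hEsub hSE)
  have hvSW : v ∈ S ⊓ W := by
    rw [Finset.mem_sdiff, mem_fsetV] at hvS
    exact hvS.1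
  refine ⟨S ⊓ W, ⟨⟨S, hSF, hST, rfl⟩, hvSW⟩, ?_⟩
  rintro L' ⟨⟨S', hS'F, hS'T, rfl⟩, hvL'⟩
  have hS'S : S' = S := by
    refine block_eq hF hS'F hSF (Submodule.mem_inf.1 hvL').1 (hblk S' hS'F hS'T)
      (Submodule.mem_inf.1 hvSW).1 hpS hv0 hp0 ?_
    intro h
    exact hpW (h ▸ hvW)
  rw [hS'S]
end

section
/- Let F be a (2,3)-spread of V(7,2), U a 6-dimensional subspace, W a 4-dimensional subspace of U containing no member of F, and T1, T2, T3 the three 5-dimensional subspaces of U containing W. Suppose each Ti has an alpha-point not in W, so that the members of F in Ti trace a line spread Si of W. Then S1, S2, S3 are pairwise disjoint (no 2-dimensional subspace of W belongs to two of them). -/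
/-- The three line spreads of `W` traced by `T1`, `T2`, `T3` are pairwise disjoint. -/
theorem traces_pairwise_disjoint (F : Set (Submodule (ZMod 2) V72)) (hF : IsSpread23 F)
    (U : Submodule (ZMod 2) V72) (hU : Module.finrank (ZMod 2) U = 6)
    (W : Submodule (ZMod 2) V72) (hWU : W ≤ U) (hW : Module.finrank (ZMod 2) W = 4)
    (hpoor : ∀ S ∈ F, ¬ S ≤ W)
    (T : Fin 3 → Submodule (ZMod 2) V72)
    (hTdist : Function.Injective T)
    (hTsub : ∀ i, W ≤ T i ∧ T i ≤ U ∧ Module.finrank (ZMod 2) (T i) = 5)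
    (hTall : ∀ T' : Submodule (ZMod 2) V72, W ≤ T' → T' ≤ U →
      Module.finrank (ZMod 2) T' = 5 → ∃ i, T' = T i)
    (P : Fin 3 → Submodule (ZMod 2) V72)
    (hP : ∀ i, IsAlphaPointOf F (T i) (P i) ∧ ¬ P i ≤ W) :
    ∀ i j, i ≠ j → ∀ S S', S ∈ F → S ≤ T i → S' ∈ F → S' ≤ T j →
      S ⊓ W ≠ S' ⊓ W := by

  intro i j hij S S' hS hSi hS' hSj heq
  have hdS := hF.1 S hS
  have hWi := (hTsub i).1
  have hWj := (hTsub j).1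
  have hTi := (hTsub i).2.2
  have hTj := (hTsub j).2.2
  -- finrank (S ⊓ W) = 2
  have hsup : Module.finrank (ZMod 2) ↥(S ⊔ W) ≤ 5 := by
    have := Submodule.finrank_mono (sup_le hSi hWi)
    omega
  have hadd : Module.finrank (ZMod 2) ↥(S ⊔ W) + Module.finrank (ZMod 2) ↥(S ⊓ W)
      = Module.finrank (ZMod 2) S + Module.finrank (ZMod 2) W :=
    Submodule.finrank_sup_add_finrank_inf_eq S W
  have hinfle : Module.finrank (ZMod 2) ↥(S ⊓ W) ≤ 3 := by
    have := Submodule.finrank_mono (inf_le_left : S ⊓ W ≤ S)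
    omega
  have hne3 : Module.finrank (ZMod 2) ↥(S ⊓ W) ≠ 3 := by
    intro h3
    have : S ⊓ W = S := by
      apply Submodule.eq_of_le_of_finrank_le inf_le_left
      omega
    exact hpoor S hS (this ▸ (inf_le_right : S ⊓ W ≤ W))
  have hdim2 : Module.finrank (ZMod 2) ↥(S ⊓ W) = 2 := by omega
  -- spread uniqueness gives S = S'
  obtain ⟨X, hX, hXuniq⟩ := hF.2 (S ⊓ W) hdim2
  have hSS' : S = S' := by
    have h1 := hXuniq S ⟨hS, inf_le_left⟩
    have h2 := hXuniq S' ⟨hS', heq ▸ inf_le_left⟩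
    rw [h1, h2]
  -- T i ⊓ T j = W
  have hTne : T i ≠ T j := fun h => hij (hTdist h)
  have hsupT : Module.finrank (ZMod 2) ↥(T i ⊔ T j) = 6 := by
    have hle : Module.finrank (ZMod 2) ↥(T i ⊔ T j) ≤ 6 := by
      have := Submodule.finrank_mono (sup_le (hTsub i).2.1 (hTsub j).2.1)
      omega
    have hlt : ¬ Module.finrank (ZMod 2) ↥(T i ⊔ T j) ≤ 5 := by
      intro h5
      apply hTne
      have h1 : T i = T i ⊔ T j := Submodule.eq_of_le_of_finrank_le le_sup_left (by omega)
      have h2 : T j = T i ⊔ T j := Submodule.eq_of_le_of_finrank_le le_sup_right (by omega)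
      exact h1.trans h2.symm
    omega
  have haddT := Submodule.finrank_sup_add_finrank_inf_eq (T i) (T j)
  have hWinf : W = T i ⊓ T j := by
    apply Submodule.eq_of_le_of_finrank_le (le_inf hWi hWj)
    omega
  have hSW : S ≤ W := by
    rw [hWinf]
    exact le_inf hSi (hSS' ▸ hSj)
  exact hpoor S hS hSW
end

section
/- There do not exist three pairwise disjoint line spreads S1, S2, S3 of V(4,2) together with an assignment that to each nonzero point Q of V(4,2) associates a 3-dimensional subspace-intersection condition as follows: for each point Q, letting L_{Q,i} be the line of Si through Q, the line L_{Q,3} is contained in the span of L_{Q,1} and L_{Q,2}. -/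
/-!
Through a nonzero point `Q` pass three distinct lines, one from each spread, all lying in the plane
spanned by the first two; over `𝔽₂` three lines through `Q` cover that plane. The plane meets every
line by dimension count, so if `ℓ ∈ S₁` and `m ∈ S₂` are skew, the `S₃`-line through any point of
`ℓ` meets `m` (and symmetrically with the roles of `S₁` and `S₂` exchanged).

Counting points gives lines `m ≠ m'` of `S₂` skew to some `ℓ ∈ S₁`, and a line `ℓ' ≠ ℓ` of `S₁`
skew to `m`. The `S₃`-line `T` through a point `Q` of `ℓ` meets `m` in some `x`, and it meets `m'`
and `ℓ'` in points other than `Q` and `x`, so both in the third point `Q + x` of `T`. Doing this for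
two points of `ℓ` gives two common points of `ℓ'` and `m'`, whence `ℓ' = m' ∈ S₁ ∩ S₂`.
-/

open Module Submodule

theorem ne_of_mem_of_disjoint {R M : Type*} [Ring R] [AddCommGroup M] [Module R M]
    {p p' : Submodule R M} (hd : Disjoint p p') {x y : M} (hx : x ∈ p) (hy : y ∈ p') (hx0 : x ≠ 0) :
    x ≠ y :=
  fun h => hx0 (disjoint_def'.1 hd x hx y hy h)

theorem three_le_finrank_sup {K V : Type*} [DivisionRing K] [AddCommGroup V] [Module K V]
    {L L' : Submodule K V} (hL : finrank K L = 2) (hL' : finrank K L' = 2) (hne : L ≠ L') :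
    3 ≤ finrank K ↥(L ⊔ L') := by
  have : FiniteDimensional K L := Module.finite_of_finrank_eq_succ hL
  have : FiniteDimensional K L' := Module.finite_of_finrank_eq_succ hL'
  have hsum := finrank_sup_add_finrank_inf_eq L L'
  have hinf : finrank K ↥(L ⊓ L') ≠ 2 := fun h => hne <|
    (eq_of_le_of_finrank_eq inf_le_left (h.trans hL.symm)).symm.trans
      (eq_of_le_of_finrank_eq inf_le_right (h.trans hL'.symm))
  have := Submodule.finrank_mono (inf_le_left : L ⊓ L' ≤ L)
  omega

theorem ZMod.two_eq_zero_or_eq_one (s : ZMod 2) : s = 0 ∨ s = 1 := by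
  revert s; decide

section TwoElementField

variable {W : Type*} [AddCommGroup W] [Module (ZMod 2) W]

theorem add_self_eq_zero_of_zmod_two (x : W) : x + x = 0 := by
  rw [← two_smul (ZMod 2) x, show (2 : ZMod 2) = 0 from rfl, zero_smul]

theorem eq_of_add_eq_zero_of_zmod_two {x y : W} (h : x + y = 0) : x = y := by
  rw [eq_neg_of_add_eq_zero_left h, neg_eq_of_add_eq_zero_right (add_self_eq_zero_of_zmod_two y)]

theorem linearIndependent_pair_of_ne {x y : W} (hx : x ≠ 0) (hy : y ≠ 0) (hxy : x ≠ y) :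
    LinearIndependent (ZMod 2) ![x, y] := by
  refine LinearIndependent.pair_iff.2 fun s t hst => ?_
  rcases ZMod.two_eq_zero_or_eq_one s with rfl | rfl <;>
    rcases ZMod.two_eq_zero_or_eq_one t with rfl | rfl <;> simp_all
  exact hxy (eq_of_add_eq_zero_of_zmod_two hst)

theorem mem_span_pair_zmod_two {x y z : W} :
    z ∈ span (ZMod 2) {x, y} ↔ z = 0 ∨ z = x ∨ z = y ∨ z = x + y := by
  rw [mem_span_pair]
  constructor
  · rintro ⟨s, t, rfl⟩
    rcases ZMod.two_eq_zero_or_eq_one s with rfl | rfl <;>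
      rcases ZMod.two_eq_zero_or_eq_one t with rfl | rfl <;> simp
  · rintro (rfl | rfl | rfl | rfl)
    exacts [⟨0, 0, by simp⟩, ⟨1, 0, by simp⟩, ⟨0, 1, by simp⟩, ⟨1, 1, by simp⟩]

theorem eq_span_pair_of_mem {L : Submodule (ZMod 2) W} (hL : finrank (ZMod 2) L = 2) {x y : W}
    (hx : x ∈ L) (hy : y ∈ L) (hx0 : x ≠ 0) (hy0 : y ≠ 0) (hxy : x ≠ y) :
    L = span (ZMod 2) {x, y} := by
  have : FiniteDimensional (ZMod 2) L := Module.finite_of_finrank_eq_succ hL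
  have hspan := finrank_span_eq_card (linearIndependent_pair_of_ne hx0 hy0 hxy)
  rw [Matrix.range_cons_cons_empty] at hspan
  refine (eq_of_le_of_finrank_eq (span_le.2 ?_) (by simp [hspan, hL])).symm
  rintro z (rfl | rfl) <;> assumption

theorem eq_zero_or_eq_or_eq_or_eq_add {L : Submodule (ZMod 2) W} (hL : finrank (ZMod 2) L = 2)
    {x y z : W} (hx : x ∈ L) (hy : y ∈ L) (hx0 : x ≠ 0) (hy0 : y ≠ 0) (hxy : x ≠ y) (hz : z ∈ L) :
    z = 0 ∨ z = x ∨ z = y ∨ z = x + y := by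
  rwa [eq_span_pair_of_mem hL hx hy hx0 hy0 hxy, mem_span_pair_zmod_two] at hz

theorem eq_add_of_mem_of_finrank_eq_two {L : Submodule (ZMod 2) W} (hL : finrank (ZMod 2) L = 2)
    {x y z : W} (hx : x ∈ L) (hy : y ∈ L) (hz : z ∈ L) (hx0 : x ≠ 0) (hy0 : y ≠ 0) (hz0 : z ≠ 0)
    (hxy : x ≠ y) (hzx : z ≠ x) (hzy : z ≠ y) : z = x + y := by
  rcases eq_zero_or_eq_or_eq_or_eq_add hL hx hy hx0 hy0 hxy hz with h | h | h | h
  exacts [(hz0 h).elim, (hzx h).elim, (hzy h).elim, h]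

theorem eq_of_mem_of_finrank_eq_two {L L' : Submodule (ZMod 2) W} (hL : finrank (ZMod 2) L = 2)
    (hL' : finrank (ZMod 2) L' = 2) {x y : W} (hx : x ∈ L) (hy : y ∈ L) (hx' : x ∈ L')
    (hy' : y ∈ L') (hx0 : x ≠ 0) (hy0 : y ≠ 0) (hxy : x ≠ y) : L = L' := by
  rw [eq_span_pair_of_mem hL hx hy hx0 hy0 hxy, eq_span_pair_of_mem hL' hx' hy' hx0 hy0 hxy]

theorem exists_mem_ne_of_finrank_eq_two {L : Submodule (ZMod 2) W} (hL : finrank (ZMod 2) L = 2)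
    (x : W) : ∃ y ∈ L, y ≠ 0 ∧ y ≠ x := by
  have : ¬ L ≤ span (ZMod 2) {x} := fun hle => by
    have := Submodule.finrank_mono hle
    have := finrank_span_le_card (R := ZMod 2) ({x} : Set W)
    simp only [Set.toFinset_singleton, Finset.card_singleton] at this
    omega
  obtain ⟨y, hy, hyx⟩ := SetLike.not_le_iff_exists.1 this
  exact ⟨y, hy, fun h => hyx (h ▸ zero_mem _), fun h => hyx (h ▸ mem_span_singleton_self y)⟩

theorem mem_or_mem_or_mem_of_mem_sup {L₁ L₂ L₃ : Submodule (ZMod 2) W}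
    (h₁ : finrank (ZMod 2) L₁ = 2) (h₂ : finrank (ZMod 2) L₂ = 2) (h₃ : finrank (ZMod 2) L₃ = 2)
    (h₁₃ : L₁ ≠ L₃) (h₂₃ : L₂ ≠ L₃) {Q : W} (hQ : Q ≠ 0) (hQ₁ : Q ∈ L₁) (hQ₂ : Q ∈ L₂)
    (hQ₃ : Q ∈ L₃) (hle : L₃ ≤ L₁ ⊔ L₂) {v : W} (hv : v ∈ L₁ ⊔ L₂) :
    v ∈ L₁ ∨ v ∈ L₂ ∨ v ∈ L₃ := by
  obtain ⟨a, ha, b, hb, rfl⟩ := mem_sup.1 hv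
  by_cases ha' : a = 0 ∨ a = Q
  · refine Or.inr (Or.inl (add_mem ?_ hb))
    rcases ha' with rfl | rfl
    exacts [zero_mem _, hQ₂]
  by_cases hb' : b = 0 ∨ b = Q
  · refine Or.inl (add_mem ha ?_)
    rcases hb' with rfl | rfl
    exacts [zero_mem _, hQ₁]
  rw [not_or] at ha' hb'
  obtain ⟨c, hc, hc0, hcQ⟩ := exists_mem_ne_of_finrank_eq_two h₃ Q
  have hc₁ : c ∉ L₁ := fun h => h₁₃ (eq_of_mem_of_finrank_eq_two h₁ h₃ hQ₁ h hQ₃ hc hQ hc0 hcQ.symm)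
  have hc₂ : c ∉ L₂ := fun h => h₂₃ (eq_of_mem_of_finrank_eq_two h₂ h₃ hQ₂ h hQ₃ hc hQ hc0 hcQ.symm)
  obtain ⟨a', ha'₁, b', hb'₂, rfl⟩ := mem_sup.1 (hle hc)
  -- `L₁ = {0, Q, a, Q + a}` and `c ∉ L₂`, so `a'` is `a` or `Q + a`; likewise for `b'`
  have hda : a - a' ∈ L₃ := by
    rcases eq_zero_or_eq_or_eq_or_eq_add h₁ hQ₁ ha hQ ha'.1 (Ne.symm ha'.2) ha'₁ with
      rfl | rfl | rfl | rfl
    · exact (hc₂ (by simpa using hb'₂)).elim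
    · exact (hc₂ (add_mem hQ₂ hb'₂)).elim
    · simp
    · simpa using hQ₃
  have hdb : b - b' ∈ L₃ := by
    rcases eq_zero_or_eq_or_eq_or_eq_add h₂ hQ₂ hb hQ hb'.1 (Ne.symm hb'.2) hb'₂ with
      rfl | rfl | rfl | rfl
    · exact (hc₁ (by simpa using ha'₁)).elim
    · exact (hc₁ (add_mem ha'₁ hQ₁)).elim
    · simp
    · simpa using hQ₃
  have : a + b = (a' + b') + (a - a') + (b - b') := by abel
  exact Or.inr (Or.inr (this ▸ add_mem (add_mem hc hda) hdb))

end TwoElementField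

theorem exists_forall_notMem_of_finrank_le_two {ι : Type*} [Fintype ι]
    (L : ι → Submodule (ZMod 2) V42) (hL : ∀ i, finrank (ZMod 2) (L i) ≤ 2)
    (hι : 3 * Fintype.card ι < 15) : ∃ v, ∀ i, v ∉ L i := by
  by_contra! hcover
  have hsub : ({0}ᶜ : Set V42) ⊆ ⋃ i, (L i : Set V42) \ {0} := fun v hv => by
    obtain ⟨i, hi⟩ := hcover v
    exact Set.mem_iUnion.2 ⟨i, hi, hv⟩
  have hcard : ∀ i, ((L i : Set V42) \ {0}).ncard ≤ 3 := fun i => by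
    rw [Set.ncard_sdiff_singleton_of_mem (zero_mem (L i)), ← Nat.card_coe_set_eq]
    have : Nat.card (L i) = 2 ^ finrank (ZMod 2) (L i) := by
      rw [Module.natCard_eq_pow_finrank (K := ZMod 2), Nat.card_zmod]
    have := Nat.pow_le_pow_right two_pos (hL i)
    simp only [SetLike.coe_sort_coe]
    omega
  have := (Set.ncard_le_ncard hsub (Set.toFinite _)).trans (Set.ncard_iUnion_le_of_fintype _)
  have := Finset.sum_le_sum (s := Finset.univ) fun i _ => hcard i
  simp only [Finset.sum_const, Finset.card_univ, smul_eq_mul] at this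
  have h15 : ({0}ᶜ : Set V42).ncard = 15 := by
    rw [Set.ncard_compl]; simp
  omega

namespace IsLineSpread

variable {S : Set (Submodule (ZMod 2) V42)}

theorem finrank_eq (hS : IsLineSpread S) {L : Submodule (ZMod 2) V42} (hL : L ∈ S) :
    finrank (ZMod 2) L = 2 :=
  hS.1 L hL

theorem exists_mem (hS : IsLineSpread S) {v : V42} (hv : v ≠ 0) : ∃ L ∈ S, v ∈ L :=
  (hS.2 v hv).exists

theorem eq_of_mem (hS : IsLineSpread S) {L L' : Submodule (ZMod 2) V42} (hL : L ∈ S)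
    (hL' : L' ∈ S) {v : V42} (hv : v ≠ 0) (hvL : v ∈ L) (hvL' : v ∈ L') : L = L' :=
  (hS.2 v hv).unique ⟨hL, hvL⟩ ⟨hL', hvL'⟩

theorem disjoint_of_ne (hS : IsLineSpread S) {L L' : Submodule (ZMod 2) V42} (hL : L ∈ S)
    (hL' : L' ∈ S) (hne : L ≠ L') : Disjoint L L' :=
  disjoint_def.2 fun _ hvL hvL' => by_contra fun hv => hne (hS.eq_of_mem hL hL' hv hvL hvL')

theorem exists_disjoint_ne (hS : IsLineSpread S) {A B : Submodule (ZMod 2) V42}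
    (hA : finrank (ZMod 2) A = 2) (hB : finrank (ZMod 2) B = 2) :
    ∃ L ∈ S, Disjoint L A ∧ L ≠ B := by
  obtain ⟨p, hp, hp0, -⟩ := exists_mem_ne_of_finrank_eq_two hA 0
  obtain ⟨q, hq, hq0, hqp⟩ := exists_mem_ne_of_finrank_eq_two hA p
  have hpq0 : p + q ≠ 0 := fun h => hqp (eq_of_add_eq_zero_of_zmod_two h).symm
  obtain ⟨Lp, hLp, hpLp⟩ := hS.exists_mem hp0
  obtain ⟨Lq, hLq, hqLq⟩ := hS.exists_mem hq0
  obtain ⟨Lpq, hLpq, hpqLpq⟩ := hS.exists_mem hpq0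
  -- `S` has at most three lines meeting `A`; together with `B` they leave a point uncovered
  obtain ⟨R, hR⟩ := exists_forall_notMem_of_finrank_le_two ![Lp, Lq, Lpq, B]
    (fun i => by
      fin_cases i
      exacts [(hS.finrank_eq hLp).le, (hS.finrank_eq hLq).le, (hS.finrank_eq hLpq).le, hB.le])
    (by simp)
  simp only [Fin.forall_fin_succ, Matrix.cons_val_zero, Matrix.cons_val_succ] at hR
  obtain ⟨hRp, hRq, hRpq, hRB, -⟩ := hR
  obtain ⟨L, hL, hRL⟩ := hS.exists_mem (v := R) fun h => hRB (h ▸ zero_mem B)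
  refine ⟨L, hL, disjoint_def.2 fun y hyL hyA => by_contra fun hy0 => ?_, fun h => hRB (h ▸ hRL)⟩
  rcases eq_zero_or_eq_or_eq_or_eq_add hA hp hq hp0 hq0 hqp.symm hyA with rfl | rfl | rfl | rfl
  · exact hy0 rfl
  · exact hRp (hS.eq_of_mem hL hLp hy0 hyL hpLp ▸ hRL)
  · exact hRq (hS.eq_of_mem hL hLq hy0 hyL hqLq ▸ hRL)
  · exact hRpq (hS.eq_of_mem hL hLpq hy0 hyL hpqLpq ▸ hRL)

end IsLineSpread

structure CompatibleSpreads (S₁ S₂ S₃ : Set (Submodule (ZMod 2) V42)) : Prop where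
  isLineSpread₁ : IsLineSpread S₁
  isLineSpread₂ : IsLineSpread S₂
  isLineSpread₃ : IsLineSpread S₃
  disjoint₁₂ : Disjoint S₁ S₂
  disjoint₁₃ : Disjoint S₁ S₃
  disjoint₂₃ : Disjoint S₂ S₃
  le_sup : ∀ Q : V42, Q ≠ 0 → ∀ L₁ L₂ L₃ : Submodule (ZMod 2) V42,
    L₁ ∈ S₁ → Q ∈ L₁ → L₂ ∈ S₂ → Q ∈ L₂ → L₃ ∈ S₃ → Q ∈ L₃ → L₃ ≤ L₁ ⊔ L₂

namespace CompatibleSpreads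

variable {S₁ S₂ S₃ : Set (Submodule (ZMod 2) V42)}

theorem swap (h : CompatibleSpreads S₁ S₂ S₃) : CompatibleSpreads S₂ S₁ S₃ where
  isLineSpread₁ := h.isLineSpread₂
  isLineSpread₂ := h.isLineSpread₁
  isLineSpread₃ := h.isLineSpread₃
  disjoint₁₂ := h.disjoint₁₂.symm
  disjoint₁₃ := h.disjoint₂₃
  disjoint₂₃ := h.disjoint₁₃
  le_sup Q hQ L₂ L₁ L₃ hL₂ hQ₂ hL₁ hQ₁ hL₃ hQ₃ :=
    sup_comm L₁ L₂ ▸ h.le_sup Q hQ L₁ L₂ L₃ hL₁ hQ₁ hL₂ hQ₂ hL₃ hQ₃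

theorem exists_mem_of_disjoint (h : CompatibleSpreads S₁ S₂ S₃)
    {ℓ m T : Submodule (ZMod 2) V42} (hℓ : ℓ ∈ S₁) (hm : m ∈ S₂) (hℓm : Disjoint ℓ m)
    {Q : V42} (hQ : Q ≠ 0) (hQℓ : Q ∈ ℓ) (hT : T ∈ S₃) (hQT : Q ∈ T) :
    ∃ P ∈ T, P ∈ m ∧ P ≠ 0 := by
  obtain ⟨L, hL, hQL⟩ := h.isLineSpread₂.exists_mem hQ
  have hℓ₂ := h.isLineSpread₁.finrank_eq hℓ
  have hL₂ := h.isLineSpread₂.finrank_eq hL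
  have hplane : ¬ Disjoint (ℓ ⊔ L) m := fun hd => by
    have := finrank_add_finrank_le_of_disjoint hd
    have := three_le_finrank_sup hℓ₂ hL₂ (h.disjoint₁₂.ne_of_mem hℓ hL)
    simp only [h.isLineSpread₂.finrank_eq hm, finrank_fin_fun] at *
    omega
  simp only [disjoint_def, not_forall] at hplane
  obtain ⟨P, hP, hPm, hP0⟩ := hplane
  have hℓT := h.disjoint₁₃.ne_of_mem hℓ hT
  have hLT := h.disjoint₂₃.ne_of_mem hL hT
  rcases mem_or_mem_or_mem_of_mem_sup hℓ₂ hL₂ (h.isLineSpread₃.finrank_eq hT) hℓT hLT hQ hQℓ hQL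
    hQT (h.le_sup Q hQ ℓ L T hℓ hQℓ hL hQL hT hQT) hP with hPℓ | hPL | hPT
  · exact (hP0 (disjoint_def.1 hℓm P hPℓ hPm)).elim
  · have hLm := h.isLineSpread₂.eq_of_mem hL hm hP0 hPL hPm
    exact (hQ (disjoint_def.1 hℓm Q hQℓ (hLm ▸ hQL))).elim
  · exact ⟨P, hPT, hPm, hP0⟩

theorem exists_mem_inf_of_disjoint (h : CompatibleSpreads S₁ S₂ S₃)
    {ℓ ℓ' m m' T : Submodule (ZMod 2) V42} (hℓ : ℓ ∈ S₁) (hℓ' : ℓ' ∈ S₁) (hm : m ∈ S₂)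
    (hm' : m' ∈ S₂) (hℓ'ℓ : ℓ' ≠ ℓ) (hm'm : m' ≠ m) (hmℓ : Disjoint m ℓ) (hm'ℓ : Disjoint m' ℓ)
    (hℓ'm : Disjoint ℓ' m) {Q : V42} (hQ : Q ≠ 0) (hQℓ : Q ∈ ℓ) (hT : T ∈ S₃) (hQT : Q ∈ T) :
    ∃ y ∈ T, y ∈ ℓ' ⊓ m' ∧ y ≠ 0 := by
  obtain ⟨x, hxT, hxm, hx0⟩ := h.exists_mem_of_disjoint hℓ hm hmℓ.symm hQ hQℓ hT hQT
  obtain ⟨y, hyT, hym', hy0⟩ := h.exists_mem_of_disjoint hℓ hm' hm'ℓ.symm hQ hQℓ hT hQT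
  obtain ⟨z, hzT, hzℓ', hz0⟩ := h.swap.exists_mem_of_disjoint hm hℓ' hℓ'm.symm hx0 hxm hT hxT
  have hT₂ := h.isLineSpread₃.finrank_eq hT
  have hQx := ne_of_mem_of_disjoint hmℓ.symm hQℓ hxm hQ
  have hy : y = Q + x := eq_add_of_mem_of_finrank_eq_two hT₂ hQT hxT hyT hQ hx0 hy0 hQx
    (ne_of_mem_of_disjoint hm'ℓ.symm hQℓ hym' hQ).symm
    (ne_of_mem_of_disjoint (h.isLineSpread₂.disjoint_of_ne hm' hm hm'm) hym' hxm hy0)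
  have hz : z = Q + x := eq_add_of_mem_of_finrank_eq_two hT₂ hQT hxT hzT hQ hx0 hz0 hQx
    (ne_of_mem_of_disjoint (h.isLineSpread₁.disjoint_of_ne hℓ' hℓ hℓ'ℓ) hzℓ' hQℓ hz0)
    (ne_of_mem_of_disjoint hℓ'm hzℓ' hxm hz0)
  exact ⟨y, hyT, ⟨hy ▸ hz ▸ hzℓ', hym'⟩, hy0⟩

end CompatibleSpreads

/-- No three pairwise disjoint line spreads of `V(4,2)` can satisfy: for every
nonzero point `Q`, the line of `S3` through `Q` lies in the span of the lines of
`S1` and `S2` through `Q`. -/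
theorem no_three_compatible_spreads :
    ¬ ∃ S1 S2 S3 : Set (Submodule (ZMod 2) V42),
      IsLineSpread S1 ∧ IsLineSpread S2 ∧ IsLineSpread S3 ∧
      S1 ∩ S2 = ∅ ∧ S1 ∩ S3 = ∅ ∧ S2 ∩ S3 = ∅ ∧
      ∀ Q : V42, Q ≠ 0 →
        ∀ L1 L2 L3 : Submodule (ZMod 2) V42,
          L1 ∈ S1 → Q ∈ L1 → L2 ∈ S2 → Q ∈ L2 → L3 ∈ S3 → Q ∈ L3 →
          L3 ≤ L1 ⊔ L2 := by
  rintro ⟨S₁, S₂, S₃, h₁, h₂, h₃, d₁₂, d₁₃, d₂₃, hc⟩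
  have h : CompatibleSpreads S₁ S₂ S₃ := ⟨h₁, h₂, h₃, Set.disjoint_iff_inter_eq_empty.2 d₁₂,
    Set.disjoint_iff_inter_eq_empty.2 d₁₃, Set.disjoint_iff_inter_eq_empty.2 d₂₃, hc⟩
  obtain ⟨ℓ, hℓ, -⟩ := h₁.exists_mem (v := Pi.single 0 1) (by simp)
  have hℓ₂ := h₁.finrank_eq hℓ
  obtain ⟨m, hm, hmℓ, -⟩ := h₂.exists_disjoint_ne hℓ₂ hℓ₂
  obtain ⟨m', hm', hm'ℓ, hm'm⟩ := h₂.exists_disjoint_ne hℓ₂ (h₂.finrank_eq hm)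
  obtain ⟨ℓ', hℓ', hℓ'm, hℓ'ℓ⟩ := h₁.exists_disjoint_ne (h₂.finrank_eq hm) hℓ₂
  obtain ⟨Q₁, hQ₁, hQ₁0, -⟩ := exists_mem_ne_of_finrank_eq_two hℓ₂ 0
  obtain ⟨Q₂, hQ₂, hQ₂0, hQ₂₁⟩ := exists_mem_ne_of_finrank_eq_two hℓ₂ Q₁
  obtain ⟨T₁, hT₁, hQT₁⟩ := h₃.exists_mem hQ₁0
  obtain ⟨T₂, hT₂, hQT₂⟩ := h₃.exists_mem hQ₂0
  obtain ⟨y₁, hyT₁, hy₁, hy₁0⟩ := h.exists_mem_inf_of_disjoint hℓ hℓ' hm hm' hℓ'ℓ hm'm hmℓ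
    hm'ℓ hℓ'm hQ₁0 hQ₁ hT₁ hQT₁
  obtain ⟨y₂, hyT₂, hy₂, hy₂0⟩ := h.exists_mem_inf_of_disjoint hℓ hℓ' hm hm' hℓ'ℓ hm'm hmℓ
    hm'ℓ hℓ'm hQ₂0 hQ₂ hT₂ hQT₂
  have hT₁₂ : T₁ ≠ T₂ := fun hT => h.disjoint₁₃.ne_of_mem hℓ hT₁ <| eq_of_mem_of_finrank_eq_two
    hℓ₂ (h₃.finrank_eq hT₁) hQ₁ hQ₂ hQT₁ (hT ▸ hQT₂) hQ₁0 hQ₂0 hQ₂₁.symm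
  have hy₁₂ := ne_of_mem_of_disjoint (h₃.disjoint_of_ne hT₁ hT₂ hT₁₂) hyT₁ hyT₂ hy₁0
  exact h.disjoint₁₂.ne_of_mem hℓ' hm' <| eq_of_mem_of_finrank_eq_two (h₁.finrank_eq hℓ')
    (h₂.finrank_eq hm') hy₁.1 hy₂.1 hy₁.2 hy₂.2 hy₁0 hy₂0 hy₁₂
end

section
/- Let F be a (2,3)-spread of V(7,2), U a 6-dimensional subspace all of whose points are alpha-points, W a poor 4-dimensional subspace of U (containing no member of F), and Q a point of W. Let T_Q be the unique 5-dimensional subspace of U containing the two members of F through Q lying in T1 and T2 respectively (where T1, T2, T3 are the three 5-dimensional subspaces of U containing W). Then T_Q is distinct from T1, T2, T3, and dim(T_Q ∩ W) ≤ 3. -/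
open Module in
lemma inf_eq_W_aux (W Ti Tj U : Submodule (ZMod 2) V72) (hU : finrank (ZMod 2) U = 6)
    (hne : Ti ≠ Tj) (hWi : W ≤ Ti) (hWj : W ≤ Tj) (hiU : Ti ≤ U) (hjU : Tj ≤ U)
    (hi : finrank (ZMod 2) Ti = 5) (hj : finrank (ZMod 2) Tj = 5)
    (hW : finrank (ZMod 2) W = 4) : Ti ⊓ Tj = W := by
  have hsup_le : Ti ⊔ Tj ≤ U := sup_le hiU hjU
  have h1 : finrank (ZMod 2) (Ti ⊔ Tj : Submodule (ZMod 2) V72) ≤ 6 := by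
    have := Submodule.finrank_mono hsup_le
    omega
  have hlt : Ti < Ti ⊔ Tj := by
    refine lt_of_le_of_ne le_sup_left (fun h => hne ?_)
    have hji : Tj ≤ Ti := h ▸ le_sup_right
    exact (Submodule.eq_of_le_of_finrank_le hji (by omega)).symm
  have h2 : 5 < finrank (ZMod 2) (Ti ⊔ Tj : Submodule (ZMod 2) V72) := by
    have := Submodule.finrank_lt_finrank_of_lt hlt
    omega
  have hform := Submodule.finrank_sup_add_finrank_inf_eq Ti Tj
  have hinf : finrank (ZMod 2) (Ti ⊓ Tj : Submodule (ZMod 2) V72) = 4 := by omega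
  exact (Submodule.eq_of_le_of_finrank_le (le_inf hWi hWj) (by omega)).symm

theorem TQ_properties (F : Set (Submodule (ZMod 2) V72)) (hF : IsSpread23 F)
    (U : Submodule (ZMod 2) V72) (hU : Module.finrank (ZMod 2) U = 6)
    (hall : ∀ P : Submodule (ZMod 2) V72, Module.finrank (ZMod 2) P = 1 → P ≤ U →
      IsAlphaPoint F P)
    (W : Submodule (ZMod 2) V72) (hWU : W ≤ U) (hW : Module.finrank (ZMod 2) W = 4)
    (hpoor : ∀ S ∈ F, ¬ S ≤ W)
    (T1 T2 T3 : Submodule (ZMod 2) V72)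
    (hTdist : T1 ≠ T2 ∧ T1 ≠ T3 ∧ T2 ≠ T3)
    (hT1 : W ≤ T1 ∧ T1 ≤ U ∧ Module.finrank (ZMod 2) T1 = 5)
    (hT2 : W ≤ T2 ∧ T2 ≤ U ∧ Module.finrank (ZMod 2) T2 = 5)
    (hT3 : W ≤ T3 ∧ T3 ≤ U ∧ Module.finrank (ZMod 2) T3 = 5)
    (hTonly : ∀ T' : Submodule (ZMod 2) V72, W ≤ T' → T' ≤ U →
      Module.finrank (ZMod 2) T' = 5 → T' = T1 ∨ T' = T2 ∨ T' = T3)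
    (P1 P2 : Submodule (ZMod 2) V72)
    (hP1 : IsAlphaPointOf F T1 P1 ∧ ¬ P1 ≤ W)
    (hP2 : IsAlphaPointOf F T2 P2 ∧ ¬ P2 ≤ W)
    (Q : Submodule (ZMod 2) V72) (hQ : Module.finrank (ZMod 2) Q = 1) (hQW : Q ≤ W)
    (S1 S2 : Submodule (ZMod 2) V72)
    (hS1 : S1 ∈ F ∧ S1 ≤ T1 ∧ Q ≤ S1) (hS2 : S2 ∈ F ∧ S2 ≤ T2 ∧ Q ≤ S2)
    (hS12 : S1 ≠ S2)
    (TQ : Submodule (ZMod 2) V72) (hTQ : Module.finrank (ZMod 2) TQ = 5)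
    (hTQU : TQ ≤ U) (hTQS : S1 ≤ TQ ∧ S2 ≤ TQ) :
    TQ ≠ T1 ∧ TQ ≠ T2 ∧ TQ ≠ T3 ∧
      Module.finrank (ZMod 2) (TQ ⊓ W : Submodule (ZMod 2) V72) ≤ 3 := by
  obtain ⟨hT12d, hT13d, hT23d⟩ := hTdist
  have h12 : T1 ⊓ T2 = W :=
    inf_eq_W_aux W T1 T2 U hU hT12d hT1.1 hT2.1 hT1.2.1 hT2.2.1 hT1.2.2 hT2.2.2 hW
  have h13 : T1 ⊓ T3 = W :=
    inf_eq_W_aux W T1 T3 U hU hT13d hT1.1 hT3.1 hT1.2.1 hT3.2.1 hT1.2.2 hT3.2.2 hW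
  have hne1 : TQ ≠ T1 := by
    intro h
    exact hpoor S2 hS2.1 (h12 ▸ le_inf (h ▸ hTQS.2) hS2.2.1)
  have hne2 : TQ ≠ T2 := by
    intro h
    exact hpoor S1 hS1.1 (h12 ▸ le_inf hS1.2.1 (h ▸ hTQS.1))
  have hne3 : TQ ≠ T3 := by
    intro h
    exact hpoor S1 hS1.1 (h13 ▸ le_inf hS1.2.1 (h ▸ hTQS.1))
  refine ⟨hne1, hne2, hne3, ?_⟩
  by_contra hdim
  have hle4 : Module.finrank (ZMod 2) (TQ ⊓ W : Submodule (ZMod 2) V72) ≤ 4 := by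
    have := Submodule.finrank_mono (inf_le_right : TQ ⊓ W ≤ W)
    omega
  have heq : TQ ⊓ W = W :=
    Submodule.eq_of_le_of_finrank_le (inf_le_right : TQ ⊓ W ≤ W) (by omega)
  have hWTQ : W ≤ TQ := heq ▸ inf_le_left
  rcases hTonly TQ hWTQ hTQU hTQ with h | h | h
  · exact hne1 h
  · exact hne2 h
  · exact hne3 h
end
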